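/- arXiv:1905.08391 — 12 statements merged into one kernel-verified Lean document; each statement's English description precedes it below -/
import Mathlib

section
/- Let F be a field, X a finite partial order, and G an additive abelian group. Suppose the incidence algebra IncidenceAlgebra F X carries a G-grading, i.e., a family ℬ : G → Submodule F (IncidenceAlgebra F X) with GradedAlgebra ℬ. Then the Jacobson radical of IncidenceAlgebra F X is a homogeneous ideal with respect to ℬ: the ideal (⊥ : Ideal (IncidenceAlgebra F X)).jacobson satisfies Ideal.IsHomogeneous ℬ. -/
open Finset DirectSum

namespace JacobsonIncidenceAux

variable {F X : Type*} [Field F] [PartialOrder X] [Fintype X] [DecidableEq X]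
  [LocallyFiniteOrder X]

local notation "A" => IncidenceAlgebra F X

lemma mul_diag (f g : A) (x : X) : (f * g) x x = f x x * g x x := by
  rw [IncidenceAlgebra.mul_apply, Finset.Icc_self, Finset.sum_singleton]

/-- The ideal of elements vanishing on the diagonal. -/
def diagIdeal : Ideal A where
  carrier := {f | ∀ x, f x x = 0}
  add_mem' hf hg x := by
    rw [IncidenceAlgebra.add_apply, hf x, hg x, add_zero]
  zero_mem' x := rfl
  smul_mem' c f hf x := by
    rw [smul_eq_mul, mul_diag, hf x, mul_zero]

lemma mem_diagIdeal {f : A} : f ∈ (diagIdeal : Ideal A) ↔ ∀ x, f x x = 0 := Iff.rfl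

/-- Height function. -/
noncomputable def ht (x : X) : ℕ :=
  (@Finset.filter _ (fun z => z < x) (Classical.decPred _) Finset.univ).card

lemma ht_lt_ht {x y : X} (h : x < y) : ht x < ht y := by
  classical
  apply Finset.card_lt_card
  rw [Finset.ssubset_iff_of_subset]
  · exact ⟨x, by simpa using h, by simp⟩
  · intro z hz
    simp only [Finset.mem_filter, Finset.mem_univ, true_and] at hz ⊢
    exact hz.trans h

lemma ht_le (x : X) : ht x ≤ Fintype.card X := by
  classical
  exact Finset.card_le_univ _

lemma diag_pow_zero {f : A} (hf : f ∈ (diagIdeal : Ideal A)) :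
    ∀ (m : ℕ) (x y : X), ht y < ht x + m → (f ^ m) x y = 0 := by
  intro m
  induction m with
  | zero =>
    intro x y hxy
    rw [pow_zero, IncidenceAlgebra.one_apply, if_neg]
    rintro rfl
    simpa using hxy
  | succ m ih =>
    intro x y hxy
    rw [pow_succ', IncidenceAlgebra.mul_apply]
    refine Finset.sum_eq_zero fun z hz => ?_
    rw [Finset.mem_Icc] at hz
    rcases eq_or_ne x z with rfl | hxz
    · rw [hf x, zero_mul]
    · have hlt : ht x < ht z := ht_lt_ht (lt_of_le_of_ne hz.1 hxz)
      rw [ih z y (by omega), mul_zero]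

lemma diag_nilpotent {f : A} (hf : f ∈ (diagIdeal : Ideal A)) : IsNilpotent f := by
  refine ⟨Fintype.card X + 1, ?_⟩
  ext x y _
  rw [diag_pow_zero hf _ x y (by have := ht_le y; omega)]
  rfl

lemma jacobson_eq_diagIdeal :
    (⊥ : Ideal A).jacobson = diagIdeal := by
  apply le_antisymm
  · -- jacobson ≤ diagIdeal : via the maximal ideals Kₓ
    intro f hf x
    set K : Ideal A :=
      { carrier := {g | g x x = 0}
        add_mem' := fun {g} {h} hg hh => by
          simp only [Set.mem_setOf_eq] at *
          rw [IncidenceAlgebra.add_apply, hg, hh, add_zero]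
        zero_mem' := rfl
        smul_mem' := fun c g hg => by
          simp only [Set.mem_setOf_eq] at *
          rw [smul_eq_mul, mul_diag, hg, mul_zero] } with hK
    have hmax : K.IsMaximal := by
      rw [Ideal.isMaximal_iff]
      constructor
      · show ¬ (1 : A) x x = 0
        rw [IncidenceAlgebra.one_apply, if_pos rfl]
        exact one_ne_zero
      · intro J a hKJ haK haJ
        have hax : a x x ≠ 0 := haK
        have h1 : (1 : A) - ((a x x)⁻¹ • a) ∈ K := by
          show ((1 : A) - (a x x)⁻¹ • a) x x = 0
          rw [IncidenceAlgebra.sub_apply, IncidenceAlgebra.one_apply, if_pos rfl,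
            IncidenceAlgebra.constSMul_apply, smul_eq_mul, inv_mul_cancel₀ hax, sub_self]
        have h2 : (a x x)⁻¹ • a ∈ J := by
          have := J.mul_mem_left ((a x x)⁻¹ • (1 : A)) haJ
          rwa [smul_mul_assoc, one_mul] at this
        have := J.add_mem (hKJ h1) h2
        simpa using this
    exact (sInf_le ⟨bot_le, hmax⟩ : (⊥ : Ideal A).jacobson ≤ K) hf
  · -- diagIdeal ≤ jacobson
    intro f hf
    rw [Ideal.jacobson]
    rw [Submodule.mem_sInf]
    rintro M ⟨-, hM⟩
    by_contra hfM
    obtain ⟨h1M, hmax⟩ := Ideal.isMaximal_iff.mp hM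
    have h1 : (1 : A) ∈ M ⊔ Ideal.span {f} :=
      hmax _ f le_sup_left hfM (Submodule.mem_sup_right (Ideal.mem_span_singleton_self f))
    obtain ⟨m, hm, y, hy, hmy⟩ := Submodule.mem_sup.mp h1
    obtain ⟨t, rfl⟩ := Ideal.mem_span_singleton'.mp hy
    have htf : t * f ∈ (diagIdeal : Ideal A) := Ideal.mul_mem_left _ t hf
    have hunit : IsUnit m := by
      have : m = 1 - t * f := by
        rw [← hmy, add_sub_cancel_right]
      rw [this]
      exact (diag_nilpotent htf).isUnit_one_sub
    exact hM.ne_top (Ideal.eq_top_of_isUnit_mem M hm hunit)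

/-! ### The idempotents -/

/-- The standard idempotent at `x`. -/
def eDelta (x : X) : A :=
  ⟨fun u v => if u = x ∧ v = x then 1 else 0, by
    intro a b h
    rw [if_neg]
    rintro ⟨rfl, rfl⟩
    exact h le_rfl⟩

lemma eDelta_apply (x u v : X) :
    eDelta (F := F) x u v = if u = x ∧ v = x then 1 else 0 := rfl

lemma mul_eDelta (f : A) (x u v : X) :
    (f * eDelta (F := F) x) u v = if v = x then f u x else 0 := by
  rw [IncidenceAlgebra.mul_apply]
  rcases eq_or_ne v x with rfl | hv
  · have h : ∀ z ∈ Finset.Icc u v, f u z * eDelta (F := F) v z v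
        = if z = v then f u v else 0 := by
      intro z hz
      rw [eDelta_apply]
      rcases eq_or_ne z v with rfl | hzv
      · simp
      · simp [hzv]
    rw [Finset.sum_congr rfl h, Finset.sum_ite_eq' (Finset.Icc u v) v (fun _ => f u v)]
    by_cases huv : u ≤ v
    · simp [huv]
    · simp [Finset.mem_Icc, huv, IncidenceAlgebra.apply_eq_zero_of_not_le huv f]
  · rw [if_neg hv]
    refine Finset.sum_eq_zero fun z hz => ?_
    rw [eDelta_apply, if_neg (by rintro ⟨-, rfl⟩; exact hv rfl), mul_zero]

lemma eDelta_mul (f : A) (x u v : X) :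
    (eDelta (F := F) x * f) u v = if u = x then f x v else 0 := by
  rw [IncidenceAlgebra.mul_apply]
  rcases eq_or_ne u x with rfl | hu
  · have h : ∀ z ∈ Finset.Icc u v, eDelta (F := F) u u z * f z v
        = if z = u then f u v else 0 := by
      intro z hz
      rw [eDelta_apply]
      rcases eq_or_ne z u with rfl | hzv
      · simp
      · simp [hzv]
    rw [Finset.sum_congr rfl h, Finset.sum_ite_eq' (Finset.Icc u v) u (fun _ => f u v)]
    by_cases huv : u ≤ v
    · simp [huv]
    · simp [Finset.mem_Icc, huv, IncidenceAlgebra.apply_eq_zero_of_not_le huv f]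
  · rw [if_neg hu]
    refine Finset.sum_eq_zero fun z hz => ?_
    rw [eDelta_apply, if_neg (by rintro ⟨rfl, -⟩; exact hu rfl), zero_mul]

/-- Evaluation as an additive monoid hom. -/
def evH (u v : X) : A →+ F :=
  AddMonoidHom.mk' (fun f => f u v) (fun f g => rfl)

lemma ia_sum_apply {ι : Type*} (s : Finset ι) (f : ι → A) (u v : X) :
    (∑ k ∈ s, f k) u v = ∑ k ∈ s, f k u v :=
  map_sum (evH u v) f s

lemma sum_eDelta : (∑ x : X, eDelta x) = (1 : A) := by
  ext u v _
  rw [show (∑ x : X, eDelta (F := F) x) u v = evH u v (∑ x : X, eDelta x) from rfl,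
    map_sum]
  simp only [evH, AddMonoidHom.mk'_apply, eDelta_apply, IncidenceAlgebra.one_apply]
  rcases eq_or_ne u v with rfl | huv
  · simp
  · rw [if_neg huv]
    exact Finset.sum_eq_zero fun z _ => by
      rw [if_neg (by rintro ⟨rfl, rfl⟩; exact huv rfl)]

lemma eDelta_idem (x : X) : eDelta (F := F) x * eDelta x = eDelta x := by
  ext u v _
  rw [mul_eDelta, eDelta_apply]
  rcases eq_or_ne v x with rfl | hv
  · rw [eDelta_apply]
    simp
  · simp [eDelta_apply, hv]

lemma eDelta_conj_eq_zero {a : A} (ha : a ∈ (diagIdeal : Ideal A)) (x : X) :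
    eDelta x * a * eDelta x = 0 := by
  ext u v _
  rw [mul_eDelta, eDelta_mul]
  rcases eq_or_ne v x with rfl | hv
  · rcases eq_or_ne u v with rfl | hu
    · simp [ha u]
    · simp [hu]
  · simp [hv]

lemma key_identity {a : A} (ha : a ∈ (diagIdeal : Ideal A)) :
    a = ∑ x : X, (a * eDelta x - eDelta x * a) * eDelta x := by
  have : ∀ x : X, (a * eDelta x - eDelta x * a) * eDelta x = a * eDelta x := by
    intro x
    rw [sub_mul, mul_assoc, eDelta_idem, eDelta_conj_eq_zero ha, sub_zero]
  rw [Finset.sum_congr rfl fun x _ => this x, ← Finset.mul_sum, sum_eDelta, mul_one]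

end JacobsonIncidenceAux

open JacobsonIncidenceAux Finset DirectSum in
/-- If a finite-dimensional incidence algebra over a field carries a grading by an
additive abelian group, then its Jacobson radical is a homogeneous ideal. -/
theorem jacobson_radical_isHomogeneous_of_abelian_grading
    {F X G : Type*} [Field F] [PartialOrder X] [Fintype X] [DecidableEq X]
    [LocallyFiniteOrder X] [AddCommGroup G] [DecidableEq G]
    (ℬ : G → Submodule F (IncidenceAlgebra F X)) [GradedAlgebra ℬ] :
    Ideal.IsHomogeneous ℬ (⊥ : Ideal (IncidenceAlgebra F X)).jacobson := by
  classical
  set A := IncidenceAlgebra F X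
  rw [jacobson_eq_diagIdeal]
  -- the "graded diagonal" evaluation
  set g : G → X → A → F := fun i y a => (DirectSum.decompose ℬ a i : A) y y with hg
  have hg_add : ∀ (i : G) (y : X) (a b : A), g i y (a + b) = g i y a + g i y b := by
    intro i y a b
    simp [hg, DirectSum.decompose_add]
  have hg_zero : ∀ (i : G) (y : X), g i y 0 = 0 := by
    intro i y
    simp [hg, DirectSum.decompose_zero]
  -- components of commutators are diagonal-free
  have hcomm : ∀ (b c : A) (i : G) (y : X), g i y (b * c) = g i y (c * b) := by
    intro b c i y
    simp only [hg, DirectSum.decompose_mul]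
    rw [DirectSum.coe_mul_apply_eq_dfinsuppSum, DirectSum.coe_mul_apply_eq_dfinsuppSum]
    simp only [DFinsupp.sum, ia_sum_apply,
      apply_ite (fun (z : IncidenceAlgebra F X) => z y y), IncidenceAlgebra.zero_apply]
    rw [Finset.sum_comm]
    refine Finset.sum_congr rfl fun j hj => Finset.sum_congr rfl fun k hk => ?_
    have hiff : j + k = i ↔ k + j = i := by rw [add_comm]
    rw [if_congr hiff rfl rfl, mul_diag, mul_diag, mul_comm]
  -- if all graded diagonals of c vanish, then so do those of c * d
  have hmul_right : ∀ (c d : A), (∀ (j : G) (z : X), g j z c = 0) →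
      ∀ (i : G) (y : X), g i y (c * d) = 0 := by
    intro c d hc i y
    simp only [hg, DirectSum.decompose_mul]
    rw [DirectSum.coe_mul_apply_eq_dfinsuppSum]
    simp only [DFinsupp.sum, ia_sum_apply,
      apply_ite (fun (z : IncidenceAlgebra F X) => z y y), IncidenceAlgebra.zero_apply]
    refine Finset.sum_eq_zero fun j hj => Finset.sum_eq_zero fun k hk => ?_
    rw [mul_diag]
    have hz := hc j y
    simp only [hg] at hz
    rw [hz, zero_mul, ite_self]
  -- conclude
  intro i a ha
  rw [mem_diagIdeal]
  intro y
  show g i y a = 0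
  rw [key_identity ha]
  -- g i y of a finite sum
  have hsum : ∀ (s : Finset X) (f : X → A), g i y (∑ x ∈ s, f x) = ∑ x ∈ s, g i y (f x) := by
    intro s f
    induction s using Finset.induction with
    | empty => simpa using hg_zero i y
    | insert _ _ hx ih => rw [Finset.sum_insert hx, Finset.sum_insert hx, hg_add, ih]
  rw [hsum]
  refine Finset.sum_eq_zero fun x _ => ?_
  refine hmul_right _ _ (fun j z => ?_) i y
  -- components of the commutator vanish on the diagonal
  have h2 := hg_add j z (a * eDelta x - eDelta x * a) (eDelta x * a)
  rw [sub_add_cancel] at h2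
  have h1 : g j z (a * eDelta x - eDelta x * a)
      = g j z (a * eDelta x) - g j z (eDelta x * a) := eq_sub_of_add_eq h2.symm
  rw [h1, hcomm, sub_self]
end

section
/- Let F be a field and X a finite partial order. An element f of IncidenceAlgebra F X lies in the Jacobson radical of IncidenceAlgebra F X if and only if f x x = 0 for every x ∈ X. -/
/-!
Taking the diagonal entry at `x` is a ring homomorphism onto `F`, so its kernel is a maximal
left ideal and contains the Jacobson radical. Conversely, if `f` has zero diagonal then so does
`g * f` for every `g`, and an element `h` with zero diagonal is nilpotent, since a nonzero term
of `(h ^ n) x y` requires a strict chain of length `n` in `[x, y]`. Hence `1 + g * f` is a unit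
for every `g`, which puts `f` in the Jacobson radical.
-/

open Finset

theorem Ideal.mem_jacobson_bot_of_forall_isNilpotent_mul {R : Type*} [Ring R] {x : R}
    (h : ∀ y, IsNilpotent (y * x)) : x ∈ (⊥ : Ideal R).jacobson := by
  refine Ideal.mem_jacobson_iff.2 fun y => ?_
  obtain ⟨u, hu⟩ := (h y).isUnit_add_one
  refine ⟨↑u⁻¹, ?_⟩
  rw [Ideal.mem_bot, sub_eq_zero, mul_assoc, ← mul_add_one, ← hu, Units.inv_mul]

namespace IncidenceAlgebra

variable {𝕜 α : Type*} [PartialOrder α] [LocallyFiniteOrder α]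

section Semiring

variable [Semiring 𝕜]

theorem mul_apply_self (f g : IncidenceAlgebra 𝕜 α) (a : α) :
    (f * g) a a = f a a * g a a := by
  simp [mul_apply]

variable [DecidableEq α]

@[simps]
def diagHom (a : α) : IncidenceAlgebra 𝕜 α →+* 𝕜 where
  toFun f := f a a
  map_one' := by simp
  map_mul' f g := mul_apply_self f g a
  map_zero' := rfl
  map_add' _ _ := rfl

theorem diagHom_surjective (a : α) : Function.Surjective (diagHom (𝕜 := 𝕜) a) :=
  fun c => ⟨c • 1, by simp [constSMul_apply]⟩

theorem pow_apply_eq_zero_of_card_Icc_le {f : IncidenceAlgebra 𝕜 α} (hf : ∀ a, f a a = 0)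
    {n : ℕ} {a b : α} (hn : #(Icc a b) ≤ n) : (f ^ n) a b = 0 := by
  induction n generalizing a with
  | zero =>
    have hab : ¬a ≤ b := by simpa using hn
    simp [ne_of_not_le hab]
  | succ n ih =>
    rw [pow_succ', mul_apply]
    refine sum_eq_zero fun z hz => ?_
    obtain ⟨haz, hzb⟩ := mem_Icc.1 hz
    obtain rfl | hlt := haz.eq_or_lt
    · rw [hf, zero_mul]
    · have hcard : #(Icc z b) < #(Icc a b) :=
        card_lt_card (Icc_ssubset_Icc_left (haz.trans hzb) hlt le_rfl)
      rw [ih (by omega), mul_zero]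

theorem isNilpotent_of_forall_apply_self_eq_zero [Fintype α] {f : IncidenceAlgebra 𝕜 α}
    (hf : ∀ a, f a a = 0) : IsNilpotent f :=
  ⟨Fintype.card α, ext fun _ _ _ => pow_apply_eq_zero_of_card_Icc_le hf (card_le_univ _)⟩

end Semiring

theorem jacobson_bot_le_ker_diagHom [DivisionRing 𝕜] [DecidableEq α] (a : α) :
    (⊥ : Ideal (IncidenceAlgebra 𝕜 α)).jacobson ≤ RingHom.ker (diagHom a) :=
  sInf_le ⟨bot_le, RingHom.ker_isMaximal_of_surjective _ (diagHom_surjective a)⟩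

end IncidenceAlgebra

/-- An element of a finite-dimensional incidence algebra over a field lies in the
Jacobson radical iff its diagonal entries all vanish. -/
theorem mem_jacobson_iff_diag_eq_zero
    {F X : Type*} [Field F] [PartialOrder X] [Fintype X] [DecidableEq X]
    [LocallyFiniteOrder X] (f : IncidenceAlgebra F X) :
    f ∈ (⊥ : Ideal (IncidenceAlgebra F X)).jacobson ↔ ∀ x : X, f x x = 0 := by
  refine ⟨fun hf x => IncidenceAlgebra.jacobson_bot_le_ker_diagHom x hf, fun hf => ?_⟩
  refine Ideal.mem_jacobson_bot_of_forall_isNilpotent_mul fun g => ?_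
  exact IncidenceAlgebra.isNilpotent_of_forall_apply_self_eq_zero fun x => by
    rw [IncidenceAlgebra.mul_apply_self, hf, mul_zero]
end

section
/- Let F be a field, X a finite partial order, and A = IncidenceAlgebra F X. The Jacobson radical of A equals, as a set, the F-linear span of the set of commutators {a*b - b*a | a, b ∈ A}. -/
open Finset

namespace JacAux

variable {F X : Type*} [Field F] [PartialOrder X] [Fintype X] [DecidableEq X]
  [LocallyFiniteOrder X]

/-- Evaluation of the diagonal entry at `x`, as a ring hom. -/
def diagHom (x : X) : IncidenceAlgebra F X →+* F where
  toFun f := f x x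
  map_one' := by simp
  map_mul' f g := by simp [IncidenceAlgebra.mul_apply]
  map_zero' := rfl
  map_add' f g := rfl

omit [Fintype X] in
lemma diagHom_surjective (x : X) : Function.Surjective (diagHom (F := F) x) := by
  intro c
  refine ⟨c • 1, ?_⟩
  simp [diagHom, IncidenceAlgebra.constSMul_apply]

/-- The ideal of elements with zero diagonal. -/
def diagZero : Ideal (IncidenceAlgebra F X) where
  carrier := {f | ∀ x, f x x = 0}
  add_mem' := fun hf hg x => by
    simp [IncidenceAlgebra.add_apply, hf x, hg x]
  zero_mem' := fun x => rfl
  smul_mem' := fun c f hf x => by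
    simp [smul_eq_mul, IncidenceAlgebra.mul_apply, hf x]

omit [Fintype X] in
lemma pow_apply_eq_zero (f : IncidenceAlgebra F X) (hf : ∀ x, f x x = 0) :
    ∀ (k : ℕ) (x y : X), (Icc x y).card ≤ k → (f ^ k) x y = 0 := by
  intro k
  induction k with
  | zero =>
    intro x y h
    simp only [Nat.le_zero, card_eq_zero, Icc_eq_empty_iff] at h
    have hxy : x ≠ y := by rintro rfl; exact h le_rfl
    simp [pow_zero, hxy]
  | succ k ih =>
    intro x y h
    by_cases hxy : x ≤ y
    · rw [pow_succ, IncidenceAlgebra.mul_apply]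
      refine Finset.sum_eq_zero fun z hz => ?_
      rw [mem_Icc] at hz
      by_cases hzy : z = y
      · subst hzy; simp [hf z]
      · have hsub : Icc x z ⊂ Icc x y := by
          refine ⟨Icc_subset_Icc_right hz.2, fun hsup => hzy ?_⟩
          have := hsup (mem_Icc.mpr ⟨hxy, le_rfl⟩)
          exact le_antisymm hz.2 (mem_Icc.mp this).2
        have hcard : (Icc x z).card ≤ k := by
          have := Finset.card_lt_card hsub
          omega
        simp [ih x z hcard]
    · exact IncidenceAlgebra.apply_eq_zero_of_not_le hxy _

lemma isNilpotent_of_diagZero (f : IncidenceAlgebra F X) (hf : ∀ x, f x x = 0) :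
    IsNilpotent f := by
  refine ⟨Fintype.card X, ?_⟩
  ext a b _
  rw [IncidenceAlgebra.zero_apply]
  exact pow_apply_eq_zero f hf _ a b (Finset.card_le_univ _)

lemma jacobson_eq_diagZero :
    (⊥ : Ideal (IncidenceAlgebra F X)).jacobson = diagZero := by
  apply le_antisymm
  · intro f hf x
    have hmax : (RingHom.ker (diagHom (F := F) x)).IsMaximal :=
      RingHom.ker_isMaximal_of_surjective _ (diagHom_surjective x)
    rw [Ideal.jacobson] at hf
    have : f ∈ RingHom.ker (diagHom (F := F) x) :=
      Ideal.mem_sInf.mp hf ⟨bot_le, hmax⟩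
    exact this
  · rw [Ideal.jacobson]
    refine le_sInf fun M hM => ?_
    obtain ⟨-, hMmax⟩ := hM
    by_contra hnle
    have hlt : M < M ⊔ diagZero := left_lt_sup.mpr hnle
    have htop : M ⊔ diagZero = ⊤ := hMmax.1.2 _ hlt
    obtain ⟨m, hm, n, hn, hmn⟩ := Submodule.mem_sup.mp
      (htop ▸ Submodule.mem_top : (1 : IncidenceAlgebra F X) ∈ M ⊔ diagZero)
    have hunit : IsUnit m := by
      have hm' : m = 1 - n := by rw [eq_sub_iff_add_eq]; exact hmn
      rw [hm']
      exact (isNilpotent_of_diagZero n hn).isUnit_one_sub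
    exact hMmax.ne_top (Ideal.eq_top_of_isUnit_mem _ hm hunit)

open Classical in
/-- Elementary "matrix unit" with value `c` at position `(x, y)`. -/
noncomputable def single (x y : X) (c : F) : IncidenceAlgebra F X :=
  ⟨fun a b => if a = x ∧ b = y ∧ x ≤ y then c else 0, by
    intro a b hab
    rw [if_neg]
    rintro ⟨rfl, rfl, hxy⟩
    exact hab hxy⟩

omit [Fintype X] [LocallyFiniteOrder X] in
lemma single_apply_eq {x y : X} (hxy : x ≤ y) (c : F) : single x y c x y = c := by
  simp only [single, IncidenceAlgebra.coe_mk]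
  rw [if_pos ⟨rfl, rfl, hxy⟩]

omit [Fintype X] [LocallyFiniteOrder X] in
lemma single_apply_ne {x y a b : X} (h : a ≠ x ∨ b ≠ y) (c : F) : single x y c a b = 0 := by
  simp only [single, IncidenceAlgebra.coe_mk]
  rw [if_neg]
  rintro ⟨rfl, rfl, -⟩
  rcases h with h | h <;> exact h rfl

omit [Fintype X] [LocallyFiniteOrder X] in
lemma single_of_not_le {x y : X} (h : ¬x ≤ y) (c : F) : single x y c = 0 := by
  ext a b _
  simp only [single, IncidenceAlgebra.coe_mk, IncidenceAlgebra.zero_apply]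
  rw [if_neg]
  rintro ⟨-, -, hxy⟩
  exact h hxy

omit [Fintype X] [LocallyFiniteOrder X] in
lemma single_zero (x y : X) : single x y (0 : F) = 0 := by
  ext a b _
  simp only [single, IncidenceAlgebra.coe_mk, IncidenceAlgebra.zero_apply, ite_self]

omit [Fintype X] in
lemma diag_mul_single {x y : X} (hxy : x ≤ y) (c : F) :
    single x x 1 * single x y c = single x y c := by
  ext a b hab
  rw [IncidenceAlgebra.mul_apply]
  refine (Finset.sum_eq_single x ?_ ?_).trans ?_
  · intro z _ hz
    rw [single_apply_ne (Or.inr hz), zero_mul]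
  · intro hx
    by_cases ha : a = x
    · by_cases hb : b = y
      · subst ha; subst hb
        exact absurd (mem_Icc.mpr ⟨le_rfl, hxy⟩) hx
      · rw [single_apply_ne (Or.inr hb), mul_zero]
    · rw [single_apply_ne (Or.inl ha), zero_mul]
  · by_cases ha : a = x
    · subst ha
      rw [single_apply_eq le_rfl, one_mul]
    · rw [single_apply_ne (Or.inl ha), zero_mul, single_apply_ne (Or.inl ha)]

omit [Fintype X] in
lemma single_mul_diag {x y : X} (hxy : x ≠ y) (c : F) :
    single x y c * single x x 1 = 0 := by
  ext a b _
  rw [IncidenceAlgebra.mul_apply, IncidenceAlgebra.zero_apply]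
  refine Finset.sum_eq_zero fun z _ => ?_
  by_cases hz : z = y
  · subst hz
    rw [single_apply_ne (F := F) (Or.inl (Ne.symm hxy)) 1, mul_zero]
  · rw [single_apply_ne (Or.inr hz), zero_mul]

omit [Fintype X] in
lemma single_eq_commutator {x y : X} (hxy : x ≠ y) (c : F) :
    single x y c = single x x 1 * single x y c - single x y c * single x x 1 := by
  by_cases hle : x ≤ y
  · rw [diag_mul_single hle, single_mul_diag hxy, sub_zero]
  · rw [single_of_not_le hle, mul_zero, zero_mul, sub_zero]

/-- Evaluation at `(a, b)` as an additive hom. -/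
def evalAddHom (a b : X) : IncidenceAlgebra F X →+ F where
  toFun f := f a b
  map_zero' := rfl
  map_add' _ _ := rfl

omit [LocallyFiniteOrder X] in
lemma eq_sum_single (f : IncidenceAlgebra F X) :
    f = ∑ p : X × X, single p.1 p.2 (f p.1 p.2) := by
  ext a b hab
  have h1 : (∑ p : X × X, single p.1 p.2 (f p.1 p.2)) a b
      = ∑ p : X × X, single p.1 p.2 (f p.1 p.2) a b :=
    map_sum (evalAddHom (F := F) a b) _ _
  rw [h1, Finset.sum_eq_single ((a, b) : X × X)]
  · rw [single_apply_eq hab]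
  · intro p _ hp
    refine single_apply_ne ?_ _
    by_contra hcon
    push_neg at hcon
    exact hp (Prod.ext hcon.1.symm hcon.2.symm)
  · intro h; exact absurd (Finset.mem_univ _) h

end JacAux

open JacAux in
/-- The Jacobson radical of a finite-dimensional incidence algebra over a field
coincides, as a set, with the linear span of the commutators. -/
theorem jacobson_eq_span_commutators
    {F X : Type*} [Field F] [PartialOrder X] [Fintype X] [DecidableEq X]
    [LocallyFiniteOrder X] :
    ((⊥ : Ideal (IncidenceAlgebra F X)).jacobson : Set (IncidenceAlgebra F X)) =
      (Submodule.span F {x : IncidenceAlgebra F X |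
        ∃ a b : IncidenceAlgebra F X, x = a * b - b * a} : Set (IncidenceAlgebra F X)) := by
  rw [jacobson_eq_diagZero]
  apply Set.Subset.antisymm
  · -- diagZero ⊆ span of commutators
    intro f hf
    have hf' : ∀ x, f x x = 0 := hf
    rw [eq_sum_single f]
    refine Submodule.sum_mem _ fun p _ => ?_
    by_cases hp : p.1 = p.2
    · have : f p.1 p.2 = 0 := by rw [← hp, hf' p.1]
      rw [this, single_zero]
      exact Submodule.zero_mem _
    · rw [single_eq_commutator hp]
      exact Submodule.subset_span ⟨_, _, rfl⟩
  · -- span of commutators ⊆ diagZero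
    intro f hf
    have : f ∈ Submodule.restrictScalars F (JacAux.diagZero (F := F) (X := X)) := by
      refine Submodule.span_le.mpr ?_ hf
      rintro _ ⟨a, b, rfl⟩
      intro x
      simp [IncidenceAlgebra.sub_apply, IncidenceAlgebra.mul_apply, mul_comm]
    exact this
end

section
/- Let F be a field, n a natural number, and r : Fin n → Fin n → Prop a reflexive, transitive, antisymmetric relation such that r i j implies i ≤ j. Let S be the set of matrices M : Matrix (Fin n) (Fin n) F with M i j = 0 whenever ¬ r i j. If e ∈ S satisfies e*e = e, then there exist matrices M, N ∈ S with M*N = 1 and N*M = 1 such that N*e*M is a diagonal matrix (Matrix.IsDiag). -/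
/-!
Let `d` be the diagonal part of the idempotent `e`; since `e` is upper triangular, `d` is again
idempotent. The element `u = d e + (1 - d)(1 - e)` satisfies `u e = d e = d u`, and it is
unipotent upper triangular inside the incidence algebra, hence a unit there (`u - 1` is
nilpotent by Cayley–Hamilton). Therefore `u e u⁻¹ = d`.
-/

open Polynomial

theorem IsIdempotentElem.intertwining {R : Type*} [Ring R] {d e : R}
    (hd : IsIdempotentElem d) (he : IsIdempotentElem e) :
    (d * e + (1 - d) * (1 - e)) * e = d * (d * e + (1 - d) * (1 - e)) := by
  have he' : (1 - e) * e = 0 := by rw [sub_mul, one_mul, he.eq, sub_self]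
  have hd' : d * (1 - d) = 0 := by rw [mul_sub, mul_one, hd.eq, sub_self]
  rw [add_mul, mul_assoc, mul_assoc, he.eq, he', mul_zero, add_zero,
    mul_add, ← mul_assoc, ← mul_assoc, hd.eq, hd', zero_mul, add_zero]

namespace Matrix

section UpperTriangular

variable {n R : Type*} [Fintype n] [LinearOrder n]

theorem IsUpperTriangular.diag_mul [NonUnitalNonAssocSemiring R] {A B : Matrix n n R}
    (hA : A.IsUpperTriangular) (hB : B.IsUpperTriangular) :
    (A * B).diag = A.diag * B.diag := by
  ext i
  rw [diag_apply, mul_apply, Pi.mul_apply]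
  refine Finset.sum_eq_single i (fun k _ hki => ?_) (by simp)
  rcases hki.lt_or_gt with hk | hk
  · rw [hA hk, zero_mul]
  · rw [hB hk, mul_zero]

theorem IsUpperTriangular.isNilpotent [CommRing R] [DecidableEq n] {A : Matrix n n R}
    (hA : A.IsUpperTriangular) (hdiag : A.diag = 0) : IsNilpotent A := by
  have hchar : A.charpoly = X ^ Fintype.card n := by
    simp [charpoly_of_isUpperTriangular A hA, show ∀ i, A i i = 0 from congrFun hdiag]
  exact ⟨Fintype.card n, by simpa [hchar] using aeval_self_charpoly A⟩

end UpperTriangular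

section Incidence

variable {ι : Type*} [Fintype ι] [DecidableEq ι]

def incidenceSubalgebra (R : Type*) [CommSemiring R] (r : ι → ι → Prop) (hrefl : ∀ i, r i i)
    (htrans : ∀ i j k, r i j → r j k → r i k) : Subalgebra R (Matrix ι ι R) where
  carrier := {M | ∀ i j, ¬ r i j → M i j = 0}
  mul_mem' {A B} hA hB i j hij := by
    show ∑ k, A i k * B k j = 0
    refine Finset.sum_eq_zero fun k _ => ?_
    by_cases hik : r i k
    · rw [hB k j fun hkj => hij (htrans i k j hik hkj), mul_zero]
    · rw [hA i k hik, zero_mul]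
  add_mem' {A B} hA hB i j hij := by rw [add_apply, hA i j hij, hB i j hij, add_zero]
  algebraMap_mem' c i j hij := by
    rw [algebraMap_eq_diagonal]
    exact diagonal_apply_ne _ fun h => hij (h ▸ hrefl i)

variable {R : Type*} [CommRing R] {r : ι → ι → Prop} {hrefl : ∀ i, r i i}
  {htrans : ∀ i j k, r i j → r j k → r i k}

theorem diagonal_mem_incidenceSubalgebra (d : ι → R) :
    diagonal d ∈ incidenceSubalgebra R r hrefl htrans :=
  fun i _ hij => diagonal_apply_ne _ fun h => hij (h ▸ hrefl i)

variable [LinearOrder ι]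

theorem IsUpperTriangular.of_mem_incidenceSubalgebra (hle : ∀ i j, r i j → i ≤ j)
    {A : Matrix ι ι R} (hA : A ∈ incidenceSubalgebra R r hrefl htrans) : A.IsUpperTriangular :=
  fun i j hji => hA i j fun hij => (hle i j hij).not_gt hji

theorem isUnit_of_mem_incidenceSubalgebra_of_diag_eq_one (hle : ∀ i j, r i j → i ≤ j)
    {u : Matrix ι ι R} (hu : u ∈ incidenceSubalgebra R r hrefl htrans) (hdiag : u.diag = 1) :
    IsUnit (⟨u, hu⟩ : incidenceSubalgebra R r hrefl htrans) := by
  set S := incidenceSubalgebra R r hrefl htrans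
  have hv : u - 1 ∈ S := sub_mem hu (one_mem S)
  obtain ⟨k, hk⟩ : IsNilpotent (u - 1) :=
    IsUpperTriangular.isNilpotent ((IsUpperTriangular.of_mem_incidenceSubalgebra hle hu).sub
      blockTriangular_one) (by rw [diag_sub, diag_one, hdiag, sub_self])
  have hnil : IsNilpotent (⟨u - 1, hv⟩ : S) := ⟨k, Subtype.ext (by simpa using hk)⟩
  convert hnil.isUnit_one_add using 1
  exact Subtype.ext (add_sub_cancel 1 u).symm

theorem exists_unit_mul_eq_diagonal_diag_mul (hle : ∀ i j, r i j → i ≤ j) {e : Matrix ι ι R}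
    (he : e ∈ incidenceSubalgebra R r hrefl htrans) (he_idem : IsIdempotentElem e) :
    ∃ U : (incidenceSubalgebra R r hrefl htrans)ˣ,
      (U : Matrix ι ι R) * e = diagonal e.diag * U := by
  set S := incidenceSubalgebra R r hrefl htrans
  have upper {A} (hA : A ∈ S) : A.IsUpperTriangular := .of_mem_incidenceSubalgebra hle hA
  have he_diag : e.diag * e.diag = e.diag := by
    rw [← (upper he).diag_mul (upper he), he_idem.eq]
  set d := diagonal e.diag
  have hd : d ∈ S := diagonal_mem_incidenceSubalgebra _
  have hd_idem : IsIdempotentElem d := by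
    rw [IsIdempotentElem, diagonal_mul_diagonal]
    exact congrArg diagonal he_diag
  have h1d : 1 - d ∈ S := sub_mem (one_mem S) hd
  have h1e : 1 - e ∈ S := sub_mem (one_mem S) he
  set u := d * e + (1 - d) * (1 - e)
  have hu_diag : u.diag = 1 := by
    rw [diag_add, (upper hd).diag_mul (upper he), (upper h1d).diag_mul (upper h1e), diag_sub,
      diag_sub, diag_one, diag_diagonal]
    linear_combination 2 * he_diag
  obtain ⟨U, hU⟩ := isUnit_of_mem_incidenceSubalgebra_of_diag_eq_one hle
    (add_mem (mul_mem hd he) (mul_mem h1d h1e)) hu_diag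
  refine ⟨U, ?_⟩
  rw [hU]
  exact hd_idem.intertwining he_idem

end Incidence

end Matrix

theorem idempotent_diagonalizable_in_incidence_matrices_general
    {F : Type*} [Field F] {n : ℕ} (r : Fin n → Fin n → Prop)
    (hrefl : ∀ i, r i i)
    (htrans : ∀ i j k, r i j → r j k → r i k)
    (hle : ∀ i j, r i j → i ≤ j)
    (e : Matrix (Fin n) (Fin n) F)
    (he_mem : ∀ i j, ¬ r i j → e i j = 0)
    (he_idem : e * e = e) :
    ∃ M N : Matrix (Fin n) (Fin n) F,
      (∀ i j, ¬ r i j → M i j = 0) ∧ (∀ i j, ¬ r i j → N i j = 0) ∧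
      M * N = 1 ∧ N * M = 1 ∧ (N * e * M).IsDiag := by
  set S := Matrix.incidenceSubalgebra F r hrefl htrans
  obtain ⟨U, hU⟩ := Matrix.exists_unit_mul_eq_diagonal_diag_mul hle he_mem he_idem
  have hUU : (U : Matrix (Fin n) (Fin n) F) * ((U⁻¹ : Sˣ) : S) = 1 :=
    congrArg Subtype.val U.mul_inv
  refine ⟨((U⁻¹ : Sˣ) : S), U, (U⁻¹ : Sˣ).1.2, (U : S).2, congrArg Subtype.val U.inv_mul,
    hUU, ?_⟩
  rw [hU, mul_assoc, hUU, mul_one]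
  exact Matrix.isDiag_diagonal _

/-- Any idempotent in the matrix realization of a finite incidence algebra inside the
upper triangular matrices can be diagonalized by a conjugation inside the algebra. -/
theorem idempotent_diagonalizable_in_incidence_matrices
    {F : Type*} [Field F] {n : ℕ} (r : Fin n → Fin n → Prop)
    (hrefl : ∀ i, r i i)
    (htrans : ∀ i j k, r i j → r j k → r i k)
    (hantisymm : ∀ i j, r i j → r j i → i = j)
    (hle : ∀ i j, r i j → i ≤ j)
    (e : Matrix (Fin n) (Fin n) F)
    (he_mem : ∀ i j, ¬ r i j → e i j = 0)
    (he_idem : e * e = e) :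
    ∃ M N : Matrix (Fin n) (Fin n) F,
      (∀ i j, ¬ r i j → M i j = 0) ∧ (∀ i j, ¬ r i j → N i j = 0) ∧
      M * N = 1 ∧ N * M = 1 ∧ (N * e * M).IsDiag :=
  idempotent_diagonalizable_in_incidence_matrices_general r hrefl htrans hle e he_mem he_idem
end

section
/- Let F be a field and x, e, b : Matrix (Fin n) (Fin n) F with x = e + b, where e is a diagonal matrix (Matrix.IsDiag e) with e*e = e and e ≠ 0, and b is strictly upper triangular (b i j = 0 whenever j ≤ i). Then there exists a polynomial p ∈ F[X] with constant coefficient zero (p.coeff 0 = 0) such that Polynomial.aeval x p is a nonzero idempotent matrix: (aeval x p) * (aeval x p) = aeval x p and aeval x p ≠ 0. -/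
/-!
Since `e` is a diagonal idempotent, `x` is upper triangular with every diagonal entry `0` or `1`,
and at least one of them equal to `1`. Hence `x - x²` is strictly upper triangular, so nilpotent,
and the classical lifting of idempotents modulo a nil ideal produces `1 - (1 - xᵏ)ᵏ`, an idempotent
polynomial in `x` without constant term. It cannot vanish: otherwise `1 - xᵏ`, and with it its
factor `1 - x`, would be invertible, whereas `det (1 - x) = ∏ (1 - xᵢᵢ) = 0`.
-/

open Polynomial

section IdempotentLifting

variable {R A : Type*} [CommRing R] [Ring A] [Algebra R A]

theorem isUnit_one_sub_of_isUnit_one_sub_pow {a : A} {k : ℕ} (h : IsUnit (1 - a ^ k)) :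
    IsUnit (1 - a) := by
  have hcomm : Commute (1 - a) (∑ i ∈ Finset.range k, a ^ i) :=
    (mul_neg_geom_sum a k).trans (geom_sum_mul_neg a k).symm
  rw [← mul_neg_geom_sum, hcomm.isUnit_mul_iff] at h
  exact h.1

theorem exists_coeff_zero_isIdempotentElem_aeval_ne_zero {a : A} (hnil : IsNilpotent (a - a ^ 2))
    (hunit : ¬IsUnit (1 - a)) :
    ∃ p : R[X], p.coeff 0 = 0 ∧ IsIdempotentElem (aeval a p) ∧ aeval a p ≠ 0 := by
  obtain ⟨k, hk⟩ := hnil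
  have hk0 : k ≠ 0 := by
    rintro rfl
    have : Subsingleton A := subsingleton_of_zero_eq_one (by simpa using hk.symm)
    exact hunit (isUnit_of_subsingleton _)
  have haeval : aeval a (1 - (1 - X ^ k) ^ k : R[X]) = 1 - (1 - a ^ k) ^ k := by simp
  refine ⟨1 - (1 - X ^ k) ^ k, by simp [coeff_zero_eq_eval_zero, hk0], ?_, ?_⟩
  · rw [haeval]
    exact isIdempotentElem_one_sub_one_sub_pow_pow a k hk
  · rw [haeval, sub_ne_zero]
    intro h
    have hpow : IsUnit ((1 - a ^ k) ^ k) := h ▸ isUnit_one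
    exact hunit (isUnit_one_sub_of_isUnit_one_sub_pow ((isUnit_pow_iff hk0).mp hpow))

end IdempotentLifting

namespace Matrix

variable {m R : Type*} [Fintype m] [LinearOrder m]

theorem IsUpperTriangular.mul_apply_self [Semiring R] {M N : Matrix m m R}
    (hM : M.IsUpperTriangular) (hN : N.IsUpperTriangular) (i : m) :
    (M * N) i i = M i i * N i i := by
  rw [mul_apply, Finset.sum_eq_single i]
  · intro k _ hk
    rcases hk.lt_or_gt with hki | hik
    · rw [hM hki, zero_mul]
    · rw [hN hik, mul_zero]
  · simp

variable [DecidableEq m] [CommRing R] {M : Matrix m m R}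

theorem IsUpperTriangular.isNilpotent_s5 (hM : M.IsUpperTriangular) (hdiag : ∀ i, M i i = 0) :
    IsNilpotent M := by
  refine ⟨Fintype.card m, ?_⟩
  have hchar : M.charpoly = X ^ Fintype.card m := by
    simp [charpoly_of_isUpperTriangular M hM, hdiag]
  simpa [hchar] using M.aeval_self_charpoly

theorem IsUpperTriangular.not_isUnit_one_sub [Nontrivial R] (hM : M.IsUpperTriangular) {i : m}
    (hi : M i i = 1) : ¬IsUnit (1 - M) := by
  have hdet : (1 - M).det = 0 := by
    rw [det_of_isUpperTriangular (blockTriangular_one.sub hM)]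
    exact Finset.prod_eq_zero (Finset.mem_univ i) (by simp [hi])
  simp [isUnit_iff_isUnit_det, hdet]

end Matrix

/-- If `x = e + b` with `e ≠ 0` a diagonal idempotent matrix and `b` strictly upper
triangular, then some polynomial in `x` with zero constant term is a nonzero idempotent. -/
theorem exists_idempotent_polynomial_of_diag_idem_add_nilpotent
    {F : Type*} [Field F] {n : ℕ} (x e b : Matrix (Fin n) (Fin n) F)
    (hx : x = e + b) (he_diag : e.IsDiag) (he_idem : e * e = e) (he_ne : e ≠ 0)
    (hb : ∀ i j : Fin n, j ≤ i → b i j = 0) :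
    ∃ p : F[X], p.coeff 0 = 0 ∧
      (aeval x p) * (aeval x p) = aeval x p ∧ aeval x p ≠ 0 := by
  have he_tri : e.IsUpperTriangular := fun i j hji => he_diag hji.ne'
  have hx_tri : x.IsUpperTriangular := hx ▸ he_tri.add fun i j hji => hb i j hji.le
  have hx_diag (i : Fin n) : x i i = e i i := by simp [hx, hb i i le_rfl]
  have he_diag_idem (i : Fin n) : IsIdempotentElem (e i i) := by
    rw [IsIdempotentElem, ← he_tri.mul_apply_self he_tri, he_idem]
  obtain ⟨i, hi⟩ : ∃ i, e i i = 1 := by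
    by_contra! h
    refine he_ne (Matrix.ext fun i j => ?_)
    rcases eq_or_ne i j with rfl | hij
    · exact (IsIdempotentElem.iff_eq_zero_or_one.mp (he_diag_idem i)).resolve_right (h i)
    · exact he_diag hij
  have hnil : IsNilpotent (x - x ^ 2) := by
    have htri : (x - x ^ 2).IsUpperTriangular := hx_tri.sub (sq x ▸ hx_tri.mul hx_tri)
    refine htri.isNilpotent_s5 fun j => ?_
    rw [Matrix.sub_apply, sq, hx_tri.mul_apply_self hx_tri, hx_diag, (he_diag_idem j).eq, sub_self]
  exact exists_coeff_zero_isIdempotentElem_aeval_ne_zero hnil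
    (hx_tri.not_isUnit_one_sub ((hx_diag i).trans hi))
end

section
/- Let F be a field, G an additive group, and A a finite-dimensional F-algebra with a G-grading, i.e., a family ℬ : G → Submodule F A with GradedAlgebra ℬ. If g ∈ G has infinite order (addOrderOf g = 0) and x ∈ ℬ g, then x is nilpotent. -/
/-- In a finite-dimensional graded algebra over a field, every homogeneous element whose
degree has infinite order is nilpotent. -/
theorem isNilpotent_of_infinite_order_degree
    {F G A : Type*} [Field F] [AddGroup G] [DecidableEq G]
    [Ring A] [Algebra F A] [FiniteDimensional F A]
    (ℬ : G → Submodule F A) [GradedAlgebra ℬ]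
    (g : G) (hg : addOrderOf g = 0) (x : A) (hx : x ∈ ℬ g) :
    IsNilpotent x := by
  by_contra h
  have hne : ∀ n : ℕ, x ^ n ≠ 0 := fun n hn => h ⟨n, hn⟩
  have hinj : Function.Injective (fun n : ℕ => n • g) := by
    rw [injective_nsmul_iff_not_isOfFinAddOrder]
    exact addOrderOf_eq_zero_iff.mp hg
  have hindep : iSupIndep (fun n : ℕ => ℬ (n • g)) :=
    ((DirectSum.Decomposition.isInternal ℬ).submodule_iSupIndep).comp hinj
  have hli : LinearIndependent F (fun n : ℕ => x ^ n) :=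
    hindep.linearIndependent _ (fun n => SetLike.pow_mem_graded n hx) hne
  have := hli.finite
  exact not_finite ℕ
end

section
/- Let F be a field and G a finite abelian group. Then there exists an F-algebra isomorphism MonoidAlgebra F G ≃ₐ[F] (G → F) (the product algebra of |G| copies of F) if and only if for every g ∈ G, writing q = orderOf g, the characteristic of F does not divide q and F contains a primitive q-th root of unity (∃ ζ : F, IsPrimitiveRoot ζ q). -/
open Finset

private lemma monoidAlgebra_split_fwd {F G : Type*} [Field F] [CommGroup G] [Finite G]
    (f : MonoidAlgebra F G ≃ₐ[F] (G → F)) (g : G) :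
    ¬ (ringChar F ∣ orderOf g) ∧ ∃ ζ : F, IsPrimitiveRoot ζ (orderOf g) := by
  have hq : 0 < orderOf g := orderOf_pos g
  constructor
  · intro hdvd
    have hchar0 : ringChar F ≠ 0 := by
      rintro h0
      rw [h0, zero_dvd_iff] at hdvd
      omega
    have hp : (ringChar F).Prime :=
      (CharP.char_is_prime_or_zero F (ringChar F)).resolve_right hchar0
    haveI := Fact.mk hp
    set p := ringChar F with hpdef
    set h : G := g ^ (orderOf g / p) with hh
    have hop : orderOf h = p := by
      rw [hh, orderOf_pow, Nat.gcd_eq_right (Nat.div_dvd_of_dvd hdvd),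
        Nat.div_div_self hdvd hq.ne']
    have hb : (f (MonoidAlgebra.of F G h)) ^ p = 1 := by
      rw [← map_pow, ← map_pow, ← hop, pow_orderOf_eq_one, map_one, map_one]
    have hone : f (MonoidAlgebra.of F G h) = 1 := by
      funext x
      have hx : (f (MonoidAlgebra.of F G h) x) ^ p = 1 := by
        have := congrFun hb x
        simpa using this
      have hzero : (f (MonoidAlgebra.of F G h) x - 1) ^ p = 0 := by
        rw [sub_pow_char, hx, one_pow, sub_self]
      have := pow_eq_zero_iff hp.ne_zero |>.mp hzero
      have := sub_eq_zero.mp this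
      simpa using this
    have h1 : h = 1 :=
      MonoidAlgebra.of_injective (R := F) (f.injective (by rw [hone, map_one, map_one]))
    rw [h1, orderOf_one] at hop
    exact hp.ne_one hop.symm
  · set q := orderOf g with hqdef
    haveI : NeZero q := ⟨hq.ne'⟩
    have hof : orderOf (MonoidAlgebra.of F G g) = q :=
      orderOf_injective _ MonoidAlgebra.of_injective g
    have hu : orderOf (f (MonoidAlgebra.of F G g)) = q := by
      rw [← hof]
      exact (AlgEquiv.toMulEquiv f).orderOf_eq _
    set u : G → F := f (MonoidAlgebra.of F G g) with hudef
    have hux : ∀ x : G, (u x) ^ q = 1 := by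
      intro x
      have : u ^ q = 1 := by rw [← hu]; exact pow_orderOf_eq_one u
      have := congrFun this x
      simpa using this
    have huu : ∀ x : G, IsUnit (u x) := fun x => IsUnit.of_pow_eq_one (hux x) hq.ne'
    set z : G → rootsOfUnity q F := fun x =>
      ⟨(huu x).unit, by
        rw [mem_rootsOfUnity]
        apply Units.ext
        push_cast
        rw [IsUnit.unit_spec]
        exact hux x⟩ with hzdef
    set d := Monoid.exponent (rootsOfUnity q F) with hddef
    have hd0 : d ≠ 0 := Monoid.exponent_ne_zero_of_finite
    have hqd : q ∣ d := by
      rw [← hu]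
      apply orderOf_dvd_of_pow_eq_one
      funext x
      have hz : (z x) ^ d = 1 := Monoid.pow_exponent_eq_one (z x)
      have : (((z x : Fˣ) : F)) ^ d = 1 := by
        have := congrArg (fun w : rootsOfUnity q F => ((w : Fˣ) : F)) hz
        push_cast at this ⊢
        simpa using this
      have hval : ((z x : Fˣ) : F) = u x := by
        rw [hzdef]
        exact (huu x).unit_spec
      rw [hval] at this
      simpa using this
    have hdq : d ∣ q := by
      apply Monoid.exponent_dvd_of_forall_pow_eq_one
      intro w
      have hw : (w : Fˣ) ^ q = 1 := (mem_rootsOfUnity q (w : Fˣ)).mp w.2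
      exact Subtype.ext (by push_cast; simpa using hw)
    have heq : d = q := Nat.dvd_antisymm hdq hqd
    obtain ⟨z₀, hz₀⟩ :=
      Monoid.exists_orderOf_eq_exponent (G := rootsOfUnity q F) Monoid.ExponentExists.of_finite
    refine ⟨((z₀ : Fˣ) : F), ?_⟩
    have horder : orderOf ((z₀ : Fˣ) : F) = q := by
      rw [orderOf_units, Subgroup.orderOf_coe, hz₀, ← hddef, heq]
    have := IsPrimitiveRoot.orderOf ((z₀ : Fˣ) : F)
    rwa [horder] at this

private lemma monoidAlgebra_split_rev {F G : Type*} [Field F] [CommGroup G] [Finite G]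
    (H : ∀ g : G, ¬ (ringChar F ∣ orderOf g) ∧ ∃ ζ : F, IsPrimitiveRoot ζ (orderOf g)) :
    Nonempty (MonoidAlgebra F G ≃ₐ[F] (G → F)) := by
  classical
  cases nonempty_fintype G
  obtain ⟨g₀, hg₀⟩ :=
    Monoid.exists_orderOf_eq_exponent (G := G) Monoid.ExponentExists.of_finite
  haveI : NeZero (Monoid.exponent G) := ⟨Monoid.exponent_ne_zero_of_finite⟩
  haveI : HasEnoughRootsOfUnity F (Monoid.exponent G) :=
    ⟨hg₀ ▸ (H g₀).2, rootsOfUnity.isCyclic F _⟩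
  obtain ⟨e⟩ := CommGroup.monoidHom_mulEquiv_of_hasEnoughRootsOfUnity G F
  haveI : Fintype (G →* Fˣ) := Fintype.ofEquiv G e.toEquiv.symm
  -- the cardinality of G is invertible in F
  have hcard : (Fintype.card G : F) ≠ 0 := by
    rw [Ne, ringChar.spec]
    intro hdvd
    rcases CharP.char_is_prime_or_zero F (ringChar F) with hp | hp
    · haveI := Fact.mk hp
      obtain ⟨g, hg⟩ := exists_prime_orderOf_dvd_card (ringChar F) hdvd
      exact (H g).1 (hg ▸ dvd_rfl)
    · rw [hp, zero_dvd_iff] at hdvd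
      exact Fintype.card_ne_zero hdvd
  -- orthogonality of characters
  have orth : ∀ g : G, g ≠ 1 → ∑ χ : G →* Fˣ, ((χ g : F)) = 0 := by
    intro g hg
    obtain ⟨ψ, hψ⟩ := CommGroup.exists_apply_ne_one_of_hasEnoughRootsOfUnity G F hg
    have key : ((ψ g : F)) * ∑ χ : G →* Fˣ, ((χ g : F)) = ∑ χ : G →* Fˣ, ((χ g : F)) := by
      rw [Finset.mul_sum]
      exact Fintype.sum_equiv (Equiv.mulLeft ψ) _ _ fun χ => by
        simp [Units.val_mul]
    have hfac : ((ψ g : F) - 1) * ∑ χ : G →* Fˣ, ((χ g : F)) = 0 := by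
      rw [sub_mul, one_mul, key, sub_self]
    rcases mul_eq_zero.mp hfac with h | h
    · exfalso
      apply hψ
      apply Units.ext
      have := sub_eq_zero.mp h
      simpa using this
    · exact h
  have orth1 : ∀ g : G, ∑ χ : G →* Fˣ, ((χ g : F)) =
      if g = 1 then (Fintype.card G : F) else 0 := by
    intro g
    by_cases hg : g = 1
    · simp only [hg, if_pos]
      rw [show (Fintype.card G : F) = (Fintype.card (G →* Fˣ) : F) by
        rw [Fintype.card_congr e.toEquiv]]
      simp
    · rw [if_neg hg]
      exact orth g hg
  -- the Fourier transform as an algebra homomorphism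
  set Φ : MonoidAlgebra F G →ₐ[F] ((G →* Fˣ) → F) :=
    Pi.algHom F _ (fun χ => MonoidAlgebra.lift F F G ((Units.coeHom F).comp χ)) with hΦdef
  have hΦ : ∀ (x : MonoidAlgebra F G) (χ : G →* Fˣ),
      Φ x χ = ∑ a ∈ x.coeff.support, x.coeff a * ((χ a : F)) := by
    intro x χ
    simp only [hΦdef, Pi.algHom_apply, MonoidAlgebra.lift_apply]
    rw [Finsupp.sum]
    simp [smul_eq_mul]
  -- injectivity
  have hinj : Function.Injective Φ := by
    rw [injective_iff_map_eq_zero]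
    intro x hx
    ext a₀
    have hzero : ∑ χ : G →* Fˣ, ((χ a₀⁻¹ : F)) * Φ x χ = 0 := by
      rw [hx]
      simp
    have hswap : ∑ χ : G →* Fˣ, ((χ a₀⁻¹ : F)) * Φ x χ =
        ∑ a ∈ x.coeff.support, x.coeff a * ∑ χ : G →* Fˣ, ((χ (a₀⁻¹ * a) : F)) := by
      simp only [hΦ, Finset.mul_sum]
      rw [Finset.sum_comm]
      refine Finset.sum_congr rfl fun a _ => ?_
      refine Finset.sum_congr rfl fun χ _ => ?_
      rw [map_mul, Units.val_mul]
      ring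
    rw [hswap] at hzero
    have hsingle : ∑ a ∈ x.coeff.support, x.coeff a * ∑ χ : G →* Fˣ, ((χ (a₀⁻¹ * a) : F)) =
        ∑ a ∈ x.coeff.support, (if a = a₀ then x.coeff a * (Fintype.card G : F) else 0) := by
      refine Finset.sum_congr rfl fun a _ => ?_
      rw [orth1]
      by_cases ha : a = a₀
      · rw [if_pos (by rw [ha]; exact inv_mul_cancel a₀), if_pos ha]
      · rw [if_neg (fun hcontra => ha (by
          have := congrArg (fun t => a₀ * t) hcontra
          simpa [mul_assoc] using this)), if_neg ha, mul_zero]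
    rw [hsingle, Finset.sum_ite_eq' x.coeff.support a₀ (fun a => x.coeff a * (Fintype.card G : F))] at hzero
    by_cases hmem : a₀ ∈ x.coeff.support
    · rw [if_pos hmem] at hzero
      rcases mul_eq_zero.mp hzero with h | h
      · simpa using h
      · exact absurd h hcard
    · simpa using Finsupp.notMem_support_iff.mp hmem
  -- surjectivity via dimension count
  haveI : Module.Finite F (MonoidAlgebra F G) :=
    Module.Finite.equiv ((Finsupp.linearEquivFunOnFinite F F G).symm.trans (MonoidAlgebra.coeffLinearEquiv F).symm)
  have hfr : Module.finrank F (MonoidAlgebra F G) = Module.finrank F ((G →* Fˣ) → F) := by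
    rw [Module.finrank_pi]
    rw [show Module.finrank F (MonoidAlgebra F G) = Fintype.card G from
      (MonoidAlgebra.coeffLinearEquiv F).finrank_eq.trans (Module.finrank_finsupp_self F)]
    rw [Fintype.card_congr e.toEquiv]
  have hsurj : Function.Surjective Φ := by
    have := (LinearMap.injective_iff_surjective_of_finrank_eq_finrank
      (f := Φ.toLinearMap) hfr).mp hinj
    exact this
  let E1 : MonoidAlgebra F G ≃ₐ[F] ((G →* Fˣ) → F) := AlgEquiv.ofBijective Φ ⟨hinj, hsurj⟩
  -- relabel coordinates along `e`
  let toA : ((G →* Fˣ) → F) →ₐ[F] (G → F) :=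
    Pi.algHom F _ (fun g => Pi.evalAlgHom F _ (e.symm g))
  let invA : (G → F) →ₐ[F] ((G →* Fˣ) → F) :=
    Pi.algHom F _ (fun χ => Pi.evalAlgHom F _ (e χ))
  let E2 : ((G →* Fˣ) → F) ≃ₐ[F] (G → F) :=
    AlgEquiv.ofAlgHom toA invA
      (by
        ext y g
        simp [toA, invA])
      (by
        ext y χ
        simp [toA, invA])
  exact ⟨E1.trans E2⟩

/-- The group algebra of a finite abelian group `G` over a field `F` splits as a product
of copies of `F` iff for each `g ∈ G` the characteristic of `F` does not divide the
order of `g` and `F` contains a primitive root of unity of that order. -/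
theorem monoidAlgebra_split_iff_roots_of_unity
    {F G : Type*} [Field F] [CommGroup G] [Finite G] :
    Nonempty (MonoidAlgebra F G ≃ₐ[F] (G → F)) ↔
      ∀ g : G, ¬ (ringChar F ∣ orderOf g) ∧ ∃ ζ : F, IsPrimitiveRoot ζ (orderOf g) := by
  constructor
  · rintro ⟨f⟩ g
    exact monoidAlgebra_split_fwd f g
  · exact monoidAlgebra_split_rev
end

section
/- Let F be a field and G a finite abelian group such that for every g ∈ G the field F contains a primitive (orderOf g)-th root of unity and the characteristic of F does not divide orderOf g. Then the F-algebra homomorphism Ψ : MonoidAlgebra F G →ₐ[F] ((G →* Fˣ) → F) determined by Ψ (single g 1) χ = χ g (for g ∈ G and characters χ : G →* Fˣ) is bijective. -/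
/-!
Both sides have dimension `|G|` over `F`: the character group `G →* Fˣ` is (non-canonically)
isomorphic to `G` because `F` contains a primitive root of unity of order `exp G`. So it suffices
to prove injectivity, i.e. that the evaluation functions `χ ↦ χ g` are linearly independent.
They are distinct characters of the group `G →* Fˣ` (characters separate the points of `G`),
so this is Dedekind–Artin independence of characters.
-/

lemma HasEnoughRootsOfUnity.exponent_of_forall_isPrimitiveRoot_orderOf
    {R G : Type*} [CommRing R] [IsDomain R] [CommGroup G] [Finite G]
    (hroot : ∀ g : G, ∃ ζ : R, IsPrimitiveRoot ζ (orderOf g)) :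
    HasEnoughRootsOfUnity R (Monoid.exponent G) := by
  obtain ⟨g, hg⟩ : ∃ g : G, orderOf g = Monoid.exponent G :=
    Monoid.exists_orderOf_eq_exponent Monoid.ExponentExists.of_finite
  have : NeZero (orderOf g) := ⟨(orderOf_pos g).ne'⟩
  exact ⟨hg ▸ hroot g, hg ▸ rootsOfUnity.isCyclic R (orderOf g)⟩

namespace MonoidAlgebra

theorem lift_apply_eq_linearCombination {k G A : Type*} [CommSemiring k] [Monoid G] [Semiring A]
    [Algebra k A] (f : G →* A) (x : MonoidAlgebra k G) :
    lift k A G f x = Finsupp.linearCombination k f (coeffLinearEquiv k x) := by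
  rw [lift_apply, Finsupp.linearCombination_apply]
  rfl

theorem injective_lift_iff_linearIndependent {k G A : Type*} [CommSemiring k] [Monoid G]
    [Semiring A] [Algebra k A] (f : G →* A) :
    Function.Injective (lift k A G f) ↔ LinearIndependent k f := by
  have : ⇑(lift k A G f) = Finsupp.linearCombination k f ∘ coeffLinearEquiv k := by
    funext x
    exact lift_apply_eq_linearCombination f x
  rw [this, EquivLike.injective_comp]
  rfl

theorem bijective_lift_of_linearIndependent {k G A : Type*} [Field k] [Monoid G] [Finite G]
    [Ring A] [Algebra k A] [FiniteDimensional k A] (f : G →* A) (hf : LinearIndependent k f)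
    (hdim : Module.finrank k A = Nat.card G) :
    Function.Bijective (lift k A G f) := by
  have hinj := (injective_lift_iff_linearIndependent f).2 hf
  refine ⟨hinj, (LinearMap.injective_iff_surjective_of_finrank_eq_finrank ?_
    (f := (lift k A G f).toLinearMap)).1 hinj⟩
  rw [hdim, Module.finrank_eq_nat_card_basis (basis G k)]

end MonoidAlgebra

namespace CommGroup

variable {G R : Type*} [CommGroup G] [Finite G] [CommRing R] [IsDomain R]
  [HasEnoughRootsOfUnity R (Monoid.exponent G)]

theorem linearIndependent_eval_characters :
    LinearIndependent R fun (g : G) (χ : G →* Rˣ) => (χ g : R) := by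
  refine (linearIndependent_monoidHom (G →* Rˣ) R).comp
    (fun g => (Units.coeHom R).comp (MonoidHom.eval g)) fun g g' hgg' => ?_
  rw [← forall_apply_eq_apply_iff G (M := R)]
  exact fun χ => Units.ext (DFunLike.congr_fun hgg' χ)

variable (G R) in
theorem finrank_characters_fun : Module.finrank R ((G →* Rˣ) → R) = Nat.card G := by
  rw [Module.finrank_eq_nat_card_basis (Pi.basisFun R (G →* Rˣ)),
    card_monoidHom_of_hasEnoughRootsOfUnity]

end CommGroup

/-- If `F` has enough roots of unity for the finite abelian group `G`, then the algebra
homomorphism `MonoidAlgebra F G → ((G →* Fˣ) → F)`, `single g 1 ↦ (χ ↦ χ g)`, is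
bijective. -/
theorem characterEval_bijective
    {F G : Type*} [Field F] [CommGroup G] [Finite G]
    (hroot : ∀ g : G, ∃ ζ : F, IsPrimitiveRoot ζ (orderOf g)) :
    Function.Bijective
      ⇑((MonoidAlgebra.lift F ((G →* Fˣ) → F) G)
        { toFun := fun g => fun χ : G →* Fˣ => ((χ g : Fˣ) : F)
          map_one' := by funext χ; simp
          map_mul' := fun g h => by funext χ; simp }) := by
  have := HasEnoughRootsOfUnity.exponent_of_forall_isPrimitiveRoot_orderOf hroot
  exact MonoidAlgebra.bijective_lift_of_linearIndependent _
    CommGroup.linearIndependent_eval_characters (CommGroup.finrank_characters_fun G F)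
end

section
/- Let F be a field, G a finite abelian group, m ∈ ℕ, and ψ : MonoidAlgebra F G ≃ₐ[F] (Fin m → F) an F-algebra isomorphism. For each i : Fin m define χ i : G → F by χ i g = ψ (single g 1) i. Then m = Nat.card G, each χ i is multiplicative with χ i 1 = 1 and takes only nonzero values (so defines a character G →* Fˣ), the maps χ i are pairwise distinct, and every group homomorphism G →* Fˣ arises (after composing with the coercion Fˣ → F) as χ i for some i. -/
/-!
By the universal property of the group algebra, characters `G →* F` are the same as
`F`-algebra homomorphisms `F[G] →ₐ[F] F`; transporting along `ψ`, these are the algebra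
homomorphisms `F^m →ₐ[F] F`, which are exactly the coordinate evaluations. Hence the
coordinates of `ψ` on the basis `G` run bijectively through the characters of `G`, and
`m = |G|` is a comparison of dimensions.
-/

open MonoidAlgebra

theorem Pi.evalAlgHom_injective {R ι : Type*} [CommSemiring R] [Nontrivial R] :
    Function.Injective (Pi.evalAlgHom R (fun _ : ι => R)) := by
  classical
  intro i j hij
  by_contra hne
  simpa [Pi.single_apply, hne] using congr($hij (Pi.single i 1))

theorem Pi.evalAlgHom_bijective {R ι : Type*} [CommSemiring R] [NoZeroDivisors R]
    [Nontrivial R] [Finite ι] : Function.Bijective (Pi.evalAlgHom R (fun _ : ι => R)) :=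
  ⟨Pi.evalAlgHom_injective, fun φ => φ.eq_piEvalAlgHom.imp fun _ h => h.symm⟩

namespace MonoidAlgebra

theorem finrank_eq_card {R G : Type*} [Semiring R] [StrongRankCondition R] [Finite G] :
    Module.finrank R (MonoidAlgebra R G) = Nat.card G := by
  have := Fintype.ofFinite G
  rw [(coeffLinearEquiv R).finrank_eq, Module.finrank_finsupp_self, Nat.card_eq_fintype_card]

variable {R G ι : Type*} [CommSemiring R] [Monoid G]

/-- `coordMonoidHom ψ i g = ψ (of R G g) i` holds by `rfl`. -/
noncomputable def coordMonoidHom (ψ : MonoidAlgebra R G ≃ₐ[R] (ι → R)) (i : ι) : G →* R :=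
  (lift R R G).symm ((Pi.evalAlgHom R _ i).comp ψ.toAlgHom)

theorem coordMonoidHom_bijective [NoZeroDivisors R] [Nontrivial R] [Finite ι]
    (ψ : MonoidAlgebra R G ≃ₐ[R] (ι → R)) : Function.Bijective (coordMonoidHom ψ) :=
  (lift R R G).symm.bijective.comp
    ((ψ.arrowCongr AlgEquiv.refl).symm.bijective.comp Pi.evalAlgHom_bijective)

end MonoidAlgebra

/-- Every algebra isomorphism from the group algebra of a finite abelian group `G` onto
a product of copies of the field is given coordinatewise by characters of `G`: the
coordinate functions are pairwise distinct nowhere-zero multiplicative maps, there are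
exactly `|G|` of them, and every character of `G` occurs among them. -/
theorem iso_to_product_is_given_by_characters
    {F G : Type*} [Field F] [CommGroup G] [Finite G] (m : ℕ)
    (ψ : MonoidAlgebra F G ≃ₐ[F] (Fin m → F)) :
    m = Nat.card G ∧
    (∀ i : Fin m, ψ (MonoidAlgebra.of F G 1) i = 1) ∧
    (∀ (i : Fin m) (g h : G),
      ψ (MonoidAlgebra.of F G (g * h)) i =
        ψ (MonoidAlgebra.of F G g) i * ψ (MonoidAlgebra.of F G h) i) ∧
    (∀ (i : Fin m) (g : G), ψ (MonoidAlgebra.of F G g) i ≠ 0) ∧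
    (∀ i j : Fin m,
      (∀ g : G, ψ (MonoidAlgebra.of F G g) i = ψ (MonoidAlgebra.of F G g) j) → i = j) ∧
    (∀ ρ : G →* Fˣ, ∃ i : Fin m, ∀ g : G,
      ((ρ g : Fˣ) : F) = ψ (MonoidAlgebra.of F G g) i) := by
  let χ := coordMonoidHom ψ
  have hχ : Function.Bijective χ := coordMonoidHom_bijective ψ
  refine ⟨?_, fun i => (χ i).map_one, fun i => (χ i).map_mul,
    fun i g => ((Group.isUnit g).map (χ i)).ne_zero, fun i j h => hχ.1 (MonoidHom.ext h),
    fun ρ => ?_⟩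
  · calc m = Module.finrank F (Fin m → F) := (Module.finrank_fin_fun F).symm
      _ = Module.finrank F (MonoidAlgebra F G) := ψ.toLinearEquiv.finrank_eq.symm
      _ = Nat.card G := finrank_eq_card
  · obtain ⟨i, hi⟩ := hχ.2 ((Units.coeHom F).comp ρ)
    exact ⟨i, fun g => (DFunLike.congr_fun hi g).symm⟩
end

section
/- Let F be a field and A a finite-dimensional commutative F-algebra, and set n = finrank F A. Then A is isomorphic as an F-algebra to the product algebra Fin n → F if and only if the number of F-algebra homomorphisms from A to F equals n, i.e., Nat.card (A →ₐ[F] F) = n. -/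
/-- A finite-dimensional commutative algebra over a field `F` is isomorphic to a product
of copies of `F` iff the number of its `F`-algebra homomorphisms to `F` equals its
dimension. -/
theorem split_iff_card_algHom_eq_finrank
    {F A : Type*} [Field F] [CommRing A] [Algebra F A] [FiniteDimensional F A] :
    Nonempty (A ≃ₐ[F] (Fin (Module.finrank F A) → F)) ↔
      Nat.card (A →ₐ[F] F) = Module.finrank F A := by
  set n := Module.finrank F A with hn
  have hLI : LinearIndependent F (AlgHom.toLinearMap : (A →ₐ[F] F) → A →ₗ[F] F) :=
    linearIndependent_toLinearMap F A F
  have hfin : Finite (A →ₐ[F] F) := hLI.finite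
  have := Fintype.ofFinite (A →ₐ[F] F)
  have hdual : Module.finrank F (A →ₗ[F] F) = n := by
    rw [Module.finrank_linearMap, Module.finrank_self, mul_one]
  have hle : Nat.card (A →ₐ[F] F) ≤ n := by
    rw [Nat.card_eq_fintype_card]
    exact hdual ▸ hLI.fintype_card_le_finrank
  constructor
  · rintro ⟨g⟩
    refine le_antisymm hle ?_
    have hinj : Function.Injective
        (fun i : Fin n => (Pi.evalAlgHom F (fun _ => F) i).comp (g : A →ₐ[F] Fin n → F)) := by
      intro i j hij
      by_contra hne
      have h1 := DFunLike.congr_fun hij (g.symm (Pi.single i (1 : F)))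
      simp only [AlgHom.coe_comp, Function.comp_apply, AlgHom.coe_coe,
        AlgEquiv.apply_symm_apply, Pi.evalAlgHom_apply] at h1
      simp only [AlgEquiv.coe_algHom, AlgEquiv.apply_symm_apply] at h1
      rw [Pi.single_eq_same, Pi.single_eq_of_ne (Ne.symm hne)] at h1
      exact one_ne_zero h1
    simpa using Nat.card_le_card_of_injective _ hinj
  · intro hcard
    rw [Nat.card_eq_fintype_card] at hcard
    rcases isEmpty_or_nonempty (A →ₐ[F] F) with hempty | hne
    · have hn0 : n = 0 := by rw [← hcard]; exact Fintype.card_eq_zero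
      have hFe : IsEmpty (Fin n) := by rw [hn0]; infer_instance
      have hA : Subsingleton A :=
        (Module.finrank_zero_iff (R := F) (M := A)).mp (by rw [← hn0])
      have hP : Subsingleton (Fin n → F) := ⟨fun f g => funext fun i => isEmptyElim i⟩
      exact ⟨AlgEquiv.ofBijective (Pi.algHom F _ (fun i : Fin n => isEmptyElim i))
        ⟨fun x y _ => Subsingleton.elim x y, fun y => ⟨0, Subsingleton.elim _ _⟩⟩⟩
    set e := Fintype.equivFinOfCardEq hcard with he
    let Φ : A →ₐ[F] (Fin n → F) := Pi.algHom F _ (fun i => e.symm i)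
    have hcard' : Fintype.card (A →ₐ[F] F) = Module.finrank F (A →ₗ[F] F) := by
      rw [hcard, hdual]
    let b : Module.Basis (A →ₐ[F] F) F (A →ₗ[F] F) :=
      basisOfLinearIndependentOfCardEqFinrank hLI hcard'
    have hΦinj : Function.Injective Φ := by
      rw [injective_iff_map_eq_zero]
      intro a ha
      have hall : ∀ ψ : A →ₐ[F] F, ψ a = 0 := by
        intro ψ
        have := congrFun (congrArg (fun x : Fin n → F => (x : Fin n → F)) ha) (e ψ)
        simpa [Φ] using this
      have hev : (LinearMap.applyₗ a : (A →ₗ[F] F) →ₗ[F] F) = 0 := by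
        refine b.ext fun ψ => ?_
        simp [b, coe_basisOfLinearIndependentOfCardEqFinrank, hall ψ]
      rw [← Module.forall_dual_apply_eq_zero_iff F a]
      intro φ
      have := DFunLike.congr_fun hev φ
      simpa using this
    have hΦsurj : Function.Surjective Φ := by
      have : Function.Injective Φ.toLinearMap := hΦinj
      rw [LinearMap.injective_iff_surjective_of_finrank_eq_finrank
        (by rw [Module.finrank_fin_fun, hn])] at this
      exact this
    exact ⟨AlgEquiv.ofBijective Φ ⟨hΦinj, hΦsurj⟩⟩
end

section
/- Let F be a field, G an abelian (multiplicative) group, and H₁, H₂ finite subgroups of G. Set K = H₁ ⊓ H₂ and L = H₁ ⊔ H₂. Give MonoidAlgebra F H₁ and MonoidAlgebra F H₂ the structure of algebras over MonoidAlgebra F K via the maps induced by the subgroup inclusions K ≤ H₁ and K ≤ H₂ (MonoidAlgebra.mapDomainAlgHom along Subgroup.inclusion). Then there is an F-algebra isomorphism (MonoidAlgebra F H₁) ⊗[MonoidAlgebra F K] (MonoidAlgebra F H₂) ≃ₐ[F] MonoidAlgebra F L sending (single h₁ 1) ⊗ₜ (single h₂ 1) to single ⟨h₁ * h₂⟩ 1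 for all h₁ ∈ H₁, h₂ ∈ H₂ (note h₁ * h₂ ∈ L since G is abelian). -/
open scoped TensorProduct

set_option maxHeartbeats 2000000

/-- For finite subgroups `H₁, H₂` of an abelian group, the tensor product of the group
algebras of `H₁` and `H₂` over the group algebra of `H₁ ⊓ H₂` is isomorphic, as an
`F`-algebra, to the group algebra of `H₁ ⊔ H₂`, via `h₁ ⊗ h₂ ↦ h₁h₂`. -/
theorem tensor_group_algebras_over_intersection
    {F G : Type*} [Field F] [CommGroup G] (H₁ H₂ : Subgroup G)
    [Finite ↥H₁] [Finite ↥H₂] :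
    letI a₁ : Algebra (MonoidAlgebra F ↥(H₁ ⊓ H₂)) (MonoidAlgebra F ↥H₁) :=
      (MonoidAlgebra.mapDomainAlgHom F F
        (Subgroup.inclusion (inf_le_left : H₁ ⊓ H₂ ≤ H₁))).toRingHom.toAlgebra
    letI a₂ : Algebra (MonoidAlgebra F ↥(H₁ ⊓ H₂)) (MonoidAlgebra F ↥H₂) :=
      (MonoidAlgebra.mapDomainAlgHom F F
        (Subgroup.inclusion (inf_le_right : H₁ ⊓ H₂ ≤ H₂))).toRingHom.toAlgebra
    letI : SMulCommClass (MonoidAlgebra F ↥(H₁ ⊓ H₂)) F (MonoidAlgebra F ↥H₁) :=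
      ⟨fun r s x => by rw [Algebra.smul_def r, Algebra.smul_def r x, mul_smul_comm]⟩
    ∃ φ : ((MonoidAlgebra F ↥H₁) ⊗[MonoidAlgebra F ↥(H₁ ⊓ H₂)] (MonoidAlgebra F ↥H₂))
        ≃ₐ[F] MonoidAlgebra F ↥(H₁ ⊔ H₂),
      ∀ (h₁ : ↥H₁) (h₂ : ↥H₂),
        φ ((MonoidAlgebra.of F ↥H₁ h₁) ⊗ₜ (MonoidAlgebra.of F ↥H₂ h₂)) =
          MonoidAlgebra.of F ↥(H₁ ⊔ H₂)
            ⟨(h₁ : G) * (h₂ : G),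
              mul_mem (Subgroup.mem_sup_left h₁.2) (Subgroup.mem_sup_right h₂.2)⟩ := by
  classical
  letI a₁ : Algebra (MonoidAlgebra F ↥(H₁ ⊓ H₂)) (MonoidAlgebra F ↥H₁) :=
    (MonoidAlgebra.mapDomainAlgHom F F
      (Subgroup.inclusion (inf_le_left : H₁ ⊓ H₂ ≤ H₁))).toRingHom.toAlgebra
  letI a₂ : Algebra (MonoidAlgebra F ↥(H₁ ⊓ H₂)) (MonoidAlgebra F ↥H₂) :=
    (MonoidAlgebra.mapDomainAlgHom F F
      (Subgroup.inclusion (inf_le_right : H₁ ⊓ H₂ ≤ H₂))).toRingHom.toAlgebra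
  letI sc : SMulCommClass (MonoidAlgebra F ↥(H₁ ⊓ H₂)) F (MonoidAlgebra F ↥H₁) :=
    ⟨fun r s x => by rw [Algebra.smul_def r, Algebra.smul_def r x, mul_smul_comm]⟩
  letI aC : Algebra (MonoidAlgebra F ↥(H₁ ⊓ H₂)) (MonoidAlgebra F ↥(H₁ ⊔ H₂)) :=
    (MonoidAlgebra.mapDomainAlgHom F F
      (Subgroup.inclusion (le_trans inf_le_left le_sup_left :
        H₁ ⊓ H₂ ≤ H₁ ⊔ H₂))).toRingHom.toAlgebra
  -- shorthand
  set R : Type _ := MonoidAlgebra F ↥(H₁ ⊓ H₂) with hR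
  -- algebraMap descriptions
  have halg₁ : ∀ r : R, algebraMap R (MonoidAlgebra F ↥H₁) r =
      MonoidAlgebra.mapDomainAlgHom F F (Subgroup.inclusion (inf_le_left : H₁ ⊓ H₂ ≤ H₁)) r :=
    fun r => rfl
  have halg₂ : ∀ r : R, algebraMap R (MonoidAlgebra F ↥H₂) r =
      MonoidAlgebra.mapDomainAlgHom F F (Subgroup.inclusion (inf_le_right : H₁ ⊓ H₂ ≤ H₂)) r :=
    fun r => rfl
  have halgC : ∀ r : R, algebraMap R (MonoidAlgebra F ↥(H₁ ⊔ H₂)) r =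
      MonoidAlgebra.mapDomainAlgHom F F (Subgroup.inclusion
        (le_trans inf_le_left le_sup_left : H₁ ⊓ H₂ ≤ H₁ ⊔ H₂)) r :=
    fun r => rfl
  -- scalar towers
  haveI t₁ : IsScalarTower F R (MonoidAlgebra F ↥H₁) :=
    ⟨fun c r x => by
      rw [Algebra.smul_def, Algebra.smul_def r x, halg₁, halg₁, map_smul, smul_mul_assoc]⟩
  haveI t₂ : IsScalarTower F R (MonoidAlgebra F ↥H₂) :=
    ⟨fun c r x => by
      rw [Algebra.smul_def, Algebra.smul_def r x, halg₂, halg₂, map_smul, smul_mul_assoc]⟩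
  haveI tC : IsScalarTower F R (MonoidAlgebra F ↥(H₁ ⊔ H₂)) :=
    ⟨fun c r x => by
      rw [Algebra.smul_def, Algebra.smul_def r x, halgC, halgC, map_smul, smul_mul_assoc]⟩
  -- the two multiplication algebra maps into the group algebra of the join
  set f : MonoidAlgebra F ↥H₁ →ₐ[F] MonoidAlgebra F ↥(H₁ ⊔ H₂) :=
    MonoidAlgebra.mapDomainAlgHom F F (Subgroup.inclusion (le_sup_left : H₁ ≤ H₁ ⊔ H₂)) with hfdef
  set g : MonoidAlgebra F ↥H₂ →ₐ[F] MonoidAlgebra F ↥(H₁ ⊔ H₂) :=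
    MonoidAlgebra.mapDomainAlgHom F F (Subgroup.inclusion (le_sup_right : H₂ ≤ H₁ ⊔ H₂)) with hgdef
  have hf_single : ∀ (h : ↥H₁) (c : F),
      f (MonoidAlgebra.single h c) =
        MonoidAlgebra.single ⟨(h : G), Subgroup.mem_sup_left h.2⟩ c := by
    intro h c
    simp only [hfdef, MonoidAlgebra.mapDomainAlgHom_apply, Finsupp.mapDomain_single]
    rw [MonoidAlgebra.mapDomain_single]; rfl
  have hg_single : ∀ (h : ↥H₂) (c : F),
      g (MonoidAlgebra.single h c) =
        MonoidAlgebra.single ⟨(h : G), Subgroup.mem_sup_right h.2⟩ c := by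
    intro h c
    simp only [hgdef, MonoidAlgebra.mapDomainAlgHom_apply, Finsupp.mapDomain_single]
    rw [MonoidAlgebra.mapDomain_single]; rfl
  -- f and g are R-linear
  have hfalg : ∀ r : R, f (algebraMap R (MonoidAlgebra F ↥H₁) r) =
      algebraMap R (MonoidAlgebra F ↥(H₁ ⊔ H₂)) r := by
    intro r
    rw [halg₁, halgC]
    have h1 : (Subgroup.inclusion (le_sup_left : H₁ ≤ H₁ ⊔ H₂)).comp
        (Subgroup.inclusion (inf_le_left : H₁ ⊓ H₂ ≤ H₁)) =
        Subgroup.inclusion (le_trans inf_le_left le_sup_left : H₁ ⊓ H₂ ≤ H₁ ⊔ H₂) := by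
      ext x; rfl
    have h2 := MonoidAlgebra.mapDomainAlgHom_comp (R := F) (A := F)
      (Subgroup.inclusion (inf_le_left : H₁ ⊓ H₂ ≤ H₁))
      (Subgroup.inclusion (le_sup_left : H₁ ≤ H₁ ⊔ H₂))
    rw [h1] at h2
    exact (AlgHom.congr_fun h2 r).symm
  have hgalg : ∀ r : R, g (algebraMap R (MonoidAlgebra F ↥H₂) r) =
      algebraMap R (MonoidAlgebra F ↥(H₁ ⊔ H₂)) r := by
    intro r
    rw [halg₂, halgC]
    have h1 : (Subgroup.inclusion (le_sup_right : H₂ ≤ H₁ ⊔ H₂)).comp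
        (Subgroup.inclusion (inf_le_right : H₁ ⊓ H₂ ≤ H₂)) =
        Subgroup.inclusion (le_trans inf_le_left le_sup_left : H₁ ⊓ H₂ ≤ H₁ ⊔ H₂) := by
      ext x; rfl
    have h2 := MonoidAlgebra.mapDomainAlgHom_comp (R := F) (A := F)
      (Subgroup.inclusion (inf_le_right : H₁ ⊓ H₂ ≤ H₂))
      (Subgroup.inclusion (le_sup_right : H₂ ≤ H₁ ⊔ H₂))
    rw [h1] at h2
    exact (AlgHom.congr_fun h2 r).symm
  have hfR : ∀ (r : R) (x : MonoidAlgebra F ↥H₁), f (r • x) = r • f x := by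
    intro r x
    rw [Algebra.smul_def, map_mul, hfalg, ← Algebra.smul_def]
  have hgR : ∀ (r : R) (x : MonoidAlgebra F ↥H₂), g (r • x) = r • g x := by
    intro r x
    rw [Algebra.smul_def, map_mul, hgalg, ← Algebra.smul_def]
  -- R-linear versions
  set fR : MonoidAlgebra F ↥H₁ →ₗ[R] MonoidAlgebra F ↥(H₁ ⊔ H₂) :=
    { toFun := f, map_add' := map_add f, map_smul' := hfR } with hfRdef
  set gR : MonoidAlgebra F ↥H₂ →ₗ[R] MonoidAlgebra F ↥(H₁ ⊔ H₂) :=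
    { toFun := g, map_add' := map_add g, map_smul' := hgR } with hgRdef
  -- forward R-linear map
  set φR : (MonoidAlgebra F ↥H₁) ⊗[R] (MonoidAlgebra F ↥H₂) →ₗ[R]
      MonoidAlgebra F ↥(H₁ ⊔ H₂) :=
    TensorProduct.lift (((LinearMap.mul R (MonoidAlgebra F ↥(H₁ ⊔ H₂))).comp fR).compl₂ gR)
    with hφRdef
  have hφR_tmul : ∀ (x : MonoidAlgebra F ↥H₁) (y : MonoidAlgebra F ↥H₂),
      φR (x ⊗ₜ y) = f x * g y := fun x y => rfl
  -- forward F-linear map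
  set φF : (MonoidAlgebra F ↥H₁) ⊗[R] (MonoidAlgebra F ↥H₂) →ₗ[F]
      MonoidAlgebra F ↥(H₁ ⊔ H₂) :=
    { toFun := φR
      map_add' := map_add φR
      map_smul' := fun c x => by
        simp only [RingHom.id_apply]
        rw [algebra_compatible_smul R c x, map_smul, ← algebra_compatible_smul] } with hφFdef
  -- decomposition of elements of the join
  have hmem : ∀ l : ↥(H₁ ⊔ H₂), ∃ y ∈ H₁, ∃ z ∈ H₂, y * z = (l : G) :=
    fun l => Subgroup.mem_sup.mp l.2
  choose u hu v hv huv using hmem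
  set dec : ↥(H₁ ⊔ H₂) → (MonoidAlgebra F ↥H₁) ⊗[R] (MonoidAlgebra F ↥H₂) :=
    fun l => MonoidAlgebra.single ⟨u l, hu l⟩ 1 ⊗ₜ MonoidAlgebra.single ⟨v l, hv l⟩ 1
    with hdecdef
  set ψ : MonoidAlgebra F ↥(H₁ ⊔ H₂) →ₗ[F]
      (MonoidAlgebra F ↥H₁) ⊗[R] (MonoidAlgebra F ↥H₂) :=
    (Finsupp.lsum F (fun l => LinearMap.toSpanSingleton F _ (dec l))).comp
      (MonoidAlgebra.coeffLinearEquiv F).toLinearMap with hψdef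
  have hψ_single : ∀ (l : ↥(H₁ ⊔ H₂)) (c : F),
      ψ (MonoidAlgebra.single l c) = c • dec l := by
    intro l c
    rw [hψdef, LinearMap.comp_apply]
    erw [Finsupp.lsum_single]
    rfl
  -- the key swapping lemma
  have key : ∀ (h₁ : ↥H₁) (h₂ : ↥H₂) (a : ↥H₁) (b : ↥H₂),
      (h₁ : G) * h₂ = (a : G) * b →
      (MonoidAlgebra.single h₁ (1 : F)) ⊗ₜ[R] (MonoidAlgebra.single h₂ (1 : F)) =
        MonoidAlgebra.single a 1 ⊗ₜ MonoidAlgebra.single b 1 := by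
    intro h₁ h₂ a b heq
    have hb : ((a : G))⁻¹ * (h₁ : G) * (h₂ : G) = (b : G) := by
      rw [mul_assoc, heq, inv_mul_cancel_left]
    have hkH₂ : ((a : G))⁻¹ * (h₁ : G) ∈ H₂ := by
      have h2' : ((a : G))⁻¹ * (h₁ : G) = (b : G) * ((h₂ : G))⁻¹ :=
        eq_mul_inv_of_mul_eq hb
      rw [h2']
      exact H₂.mul_mem b.2 (H₂.inv_mem h₂.2)
    set k : ↥(H₁ ⊓ H₂) :=
      ⟨((a : G))⁻¹ * (h₁ : G), Subgroup.mem_inf.mpr ⟨H₁.mul_mem (H₁.inv_mem a.2) h₁.2, hkH₂⟩⟩ with hkdef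
    have e1 : (MonoidAlgebra.single h₁ (1 : F) : MonoidAlgebra F ↥H₁) =
        (MonoidAlgebra.single k 1 : R) • MonoidAlgebra.single a 1 := by
      rw [Algebra.smul_def, halg₁]
      simp only [MonoidAlgebra.mapDomainAlgHom_apply, MonoidAlgebra.mapDomain_single,
        MonoidAlgebra.single_mul_single, one_mul]
      congr 1
      ext
      simp only [hkdef, Subgroup.coe_mk, Subgroup.coe_inclusion, Subgroup.coe_mul]
      rw [mul_comm ((a : G))⁻¹ (h₁ : G), mul_assoc, inv_mul_cancel, mul_one]
    have e2 : (MonoidAlgebra.single k 1 : R) •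
        (MonoidAlgebra.single h₂ (1 : F) : MonoidAlgebra F ↥H₂) =
        MonoidAlgebra.single b 1 := by
      rw [Algebra.smul_def, halg₂]
      simp only [MonoidAlgebra.mapDomainAlgHom_apply, MonoidAlgebra.mapDomain_single,
        MonoidAlgebra.single_mul_single, one_mul]
      congr 1
      ext
      simp only [Subgroup.coe_inclusion, Subgroup.coe_mul]
      exact hb
    rw [e1, TensorProduct.smul_tmul, e2]
  -- φF ∘ ψ = id
  have hφψ : φF.comp ψ = LinearMap.id := by
    refine LinearMap.toAddMonoidHom_injective (MonoidAlgebra.addMonoidHom_ext fun l c => ?_)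
    show (φF.comp ψ) (MonoidAlgebra.single l c) =
      (LinearMap.id : MonoidAlgebra F ↥(H₁ ⊔ H₂) →ₗ[F] _) (MonoidAlgebra.single l c)
    rw [LinearMap.comp_apply]
    erw [hψ_single l c]
    rw [map_smul, hdecdef]
    simp only [hφFdef, LinearMap.coe_mk, AddHom.coe_mk]
    rw [hφR_tmul, hf_single, hg_single, MonoidAlgebra.single_mul_single, one_mul]
    have : (⟨(u l : G), Subgroup.mem_sup_left (hu l)⟩ * ⟨(v l : G), Subgroup.mem_sup_right (hv l)⟩ :
        ↥(H₁ ⊔ H₂)) = l := by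
      ext
      simp [huv l]
    rw [this]
    show c • MonoidAlgebra.single l (1 : F) = MonoidAlgebra.single l c
    rw [MonoidAlgebra.smul_single', mul_one]
  -- ψ ∘ φF = id
  have hψφ : ψ.comp φF = LinearMap.id := by
    apply LinearMap.ext
    intro x
    rw [LinearMap.comp_apply, LinearMap.id_apply]
    have hx : ψ (φF x) = x := by
      induction x using TensorProduct.induction_on with
      | zero => simp
      | add p q hp hq => rw [map_add, map_add, hp, hq]
      | tmul a b =>
        induction a using MonoidAlgebra.induction_linear with
        | zero => simp [TensorProduct.zero_tmul]
        | add a₁ a₂ ha₁ ha₂ =>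
          rw [TensorProduct.add_tmul, map_add, map_add, ha₁, ha₂]
        | single h₁ c =>
          induction b using MonoidAlgebra.induction_linear with
          | zero => simp [TensorProduct.tmul_zero]
          | add b₁ b₂ hb₁ hb₂ =>
            rw [TensorProduct.tmul_add, map_add, map_add, hb₁, hb₂]
          | single h₂ d =>
            have hφ2 : φF (MonoidAlgebra.single h₁ c ⊗ₜ MonoidAlgebra.single h₂ d) =
                f (MonoidAlgebra.single h₁ c) * g (MonoidAlgebra.single h₂ d) := rfl
            rw [hφ2, hf_single, hg_single, MonoidAlgebra.single_mul_single]
            set l : ↥(H₁ ⊔ H₂) :=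
              (⟨(h₁ : G), Subgroup.mem_sup_left h₁.2⟩ * ⟨(h₂ : G), Subgroup.mem_sup_right h₂.2⟩ : ↥(H₁ ⊔ H₂))
              with hldef
            have hsingle_smul : (MonoidAlgebra.single l (c * d) :
                MonoidAlgebra F ↥(H₁ ⊔ H₂)) = (c * d) • MonoidAlgebra.single l 1 := by
              ext t
              simp [Finsupp.smul_single]
            rw [hsingle_smul, map_smul, hψ_single, one_smul]
            have hdec : dec l =
                MonoidAlgebra.single h₁ 1 ⊗ₜ[R] MonoidAlgebra.single h₂ 1 := by
              apply key ⟨u l, hu l⟩ ⟨v l, hv l⟩ h₁ h₂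
              show u l * v l = (h₁ : G) * (h₂ : G)
              rw [huv l, hldef]
              rfl
            have hc : (MonoidAlgebra.single h₁ c : MonoidAlgebra F ↥H₁) =
                c • MonoidAlgebra.single h₁ 1 := by
              rw [MonoidAlgebra.smul_single', mul_one]
            have hd : (MonoidAlgebra.single h₂ d : MonoidAlgebra F ↥H₂) =
                d • MonoidAlgebra.single h₂ 1 := by
              rw [MonoidAlgebra.smul_single', mul_one]
            have hcd : (MonoidAlgebra.single h₁ c) ⊗ₜ[R] (MonoidAlgebra.single h₂ d) =
                (c * d) • ((MonoidAlgebra.single h₁ (1 : F)) ⊗ₜ[R]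
                  (MonoidAlgebra.single h₂ (1 : F))) := by
              rw [hc, hd, ← TensorProduct.smul_tmul, smul_smul, mul_comm d c,
                ← TensorProduct.smul_tmul']
            rw [hdec, hcd]
    exact hx
  -- assemble the algebra equivalence
  have hone : φF 1 = 1 := by
    rw [Algebra.TensorProduct.one_def]
    show f 1 * g 1 = 1
    rw [map_one, map_one, one_mul]
  have hmul : ∀ x y, φF (x * y) = φF x * φF y := by
    intro x y
    induction x using TensorProduct.induction_on with
    | zero => rw [zero_mul, map_zero, zero_mul]
    | add p q hp hq => rw [add_mul, map_add, map_add, add_mul, hp, hq]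
    | tmul a b =>
      induction y using TensorProduct.induction_on with
      | zero => rw [mul_zero, map_zero, mul_zero]
      | add p q hp hq => rw [mul_add, map_add, map_add, mul_add, hp, hq]
      | tmul a' b' =>
        rw [Algebra.TensorProduct.tmul_mul_tmul]
        show f (a * a') * g (b * b') = (f a * g b) * (f a' * g b')
        rw [map_mul, map_mul]
        ring
  refine ⟨AlgEquiv.ofLinearEquiv (LinearEquiv.ofLinear φF ψ hφψ hψφ) hone hmul, ?_⟩
  intro h₁ h₂
  show φF ((MonoidAlgebra.of F ↥H₁ h₁) ⊗ₜ (MonoidAlgebra.of F ↥H₂ h₂)) = _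
  rw [MonoidAlgebra.of_apply, MonoidAlgebra.of_apply, MonoidAlgebra.of_apply]
  show f (MonoidAlgebra.single h₁ 1) * g (MonoidAlgebra.single h₂ 1) = _
  rw [hf_single, hg_single, MonoidAlgebra.single_mul_single, one_mul]
  congr 1
end

section
/- Let F be a field, X a finite partial order, and A = IncidenceAlgebra F X. Let J be the F-submodule {f ∈ A | f a a = 0 for all a ∈ X} (which is the Jacobson radical of A), and let J₁ be the F-submodule {f ∈ A | for all a, b ∈ X, f a b ≠ 0 → a ⋖ b} of functions supported on covering pairs. Then, with J*J denoting the submodule generated by products of two elements of J: (1) J₁ ⊓ (J*J) = ⊥ and J₁ ⊔ (J*J) = J, i.e., J is the internal direct sum of J₁ and J²; (2) J equals the supremum over m ≥ 1 of the submodules J₁^m (powers of J₁ under submodule multiplication). -/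
open Finset IncidenceAlgebra

section Aux
variable {F X : Type*} [Field F] [PartialOrder X] [Fintype X] [DecidableEq X]
  [LocallyFiniteOrder X]

open Classical in
/-- The indicator element of the incidence algebra at a pair `(x, y)`. -/
noncomputable def IncSingle (F : Type*) [Field F] {X : Type*} [PartialOrder X] (x y : X) :
    IncidenceAlgebra F X :=
  ⟨fun a b => if a = x ∧ b = y ∧ x ≤ y then 1 else 0, by
    intro a b hab
    split_ifs with h
    · obtain ⟨rfl, rfl, hxy⟩ := h
      exact absurd hxy hab
    · rfl⟩

open Classical in
lemma IncSingle_apply (x y a b : X) :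
    IncSingle F x y a b = if a = x ∧ b = y ∧ x ≤ y then 1 else 0 := by
  rw [IncSingle, coe_mk]
  split_ifs with h <;> rfl

lemma IncSingle_mul_IncSingle {x z y : X} (hxz : x ≤ z) (hzy : z ≤ y) :
    (IncSingle F x z) * (IncSingle F z y) = IncSingle F x y := by
  classical
  ext a b hab
  rw [mul_apply]
  by_cases hax : a = x
  · by_cases hby : b = y
    · subst hax; subst hby
      rw [Finset.sum_eq_single z]
      · simp [IncSingle_apply, hxz, hzy, hxz.trans hzy]
      · intro w hw hne
        simp [IncSingle_apply, hne]
      · intro h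
        exact absurd (mem_Icc.2 ⟨hxz, hzy⟩) h
    · rw [Finset.sum_eq_zero, IncSingle_apply, if_neg (by tauto)]
      intro w hw
      simp [IncSingle_apply, hby]
  · rw [Finset.sum_eq_zero, IncSingle_apply, if_neg (by tauto)]
    intro w hw
    simp [IncSingle_apply, hax]

lemma IncidenceAlgebra.sum_apply' {ι : Type*} (s : Finset ι)
    (g : ι → IncidenceAlgebra F X) (a b : X) :
    (∑ i ∈ s, g i) a b = ∑ i ∈ s, g i a b := by
  classical
  induction s using Finset.induction with
  | empty => simp [zero_apply]
  | insert _ _ h ih => rw [Finset.sum_insert h, Finset.sum_insert h, IncidenceAlgebra.add_apply, ih]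

lemma eq_sum_IncSingle (f : IncidenceAlgebra F X) :
    f = ∑ p : X × X, f p.1 p.2 • IncSingle F p.1 p.2 := by
  classical
  ext a b hab
  rw [IncidenceAlgebra.sum_apply']
  rw [Finset.sum_eq_single (a, b)]
  · simp [constSMul_apply, IncSingle_apply, hab]
  · intro p _ hp
    rw [constSMul_apply, IncSingle_apply, if_neg, smul_zero]
    rintro ⟨rfl, rfl, -⟩
    exact hp rfl
  · intro h
    exact absurd (Finset.mem_univ _) h

open Classical in
/-- The restriction of `f` to covering pairs. -/
noncomputable def coverPart (f : IncidenceAlgebra F X) : IncidenceAlgebra F X :=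
  ⟨fun a b => if a ⋖ b then f a b else 0, by
    intro a b hab
    split_ifs with h
    · exact absurd h.1.le hab
    · rfl⟩

open Classical in
lemma coverPart_apply (f : IncidenceAlgebra F X) (a b : X) :
    coverPart f a b = if a ⋖ b then f a b else 0 := rfl

end Aux

/-- In a finite incidence algebra, the Jacobson radical `J` (the functions vanishing on
the diagonal) decomposes as the internal direct sum of `J²` and the subspace `J₁` of
functions supported on covering pairs, and `J` is the sum of all powers of `J₁`. -/
theorem radical_eq_direct_sum_J1_J2_and_sum_of_powers
    {F X : Type*} [Field F] [PartialOrder X] [Fintype X] [DecidableEq X]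
    [LocallyFiniteOrder X]
    (J J₁ : Submodule F (IncidenceAlgebra F X))
    (hJ : ∀ f : IncidenceAlgebra F X, f ∈ J ↔ ∀ a : X, f a a = 0)
    (hJ₁ : ∀ f : IncidenceAlgebra F X, f ∈ J₁ ↔ ∀ a b : X, f a b ≠ 0 → a ⋖ b) :
    J₁ ⊓ (J * J) = ⊥ ∧ J₁ ⊔ (J * J) = J ∧ J = ⨆ m : ℕ, ⨆ _ : 1 ≤ m, J₁ ^ m := by
  classical
  -- membership of singles
  have hsingle_J : ∀ x y : X, x < y → IncSingle F x y ∈ J := by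
    intro x y hxy
    refine (hJ _).2 fun a => ?_
    rw [IncSingle_apply, if_neg]
    rintro ⟨rfl, rfl, -⟩
    exact lt_irrefl _ hxy
  have hsingle_J₁ : ∀ x y : X, x ⋖ y → IncSingle F x y ∈ J₁ := by
    intro x y hxy
    refine (hJ₁ _).2 fun a b hne => ?_
    rw [IncSingle_apply] at hne
    split_ifs at hne with h
    · obtain ⟨rfl, rfl, -⟩ := h; exact hxy
    · exact absurd rfl hne
  have hsingle_JJ : ∀ x y : X, x < y → ¬ x ⋖ y → IncSingle F x y ∈ J * J := by
    intro x y hxy hncov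
    obtain ⟨z, hz1, hz2⟩ := (not_covBy_iff hxy).1 hncov
    rw [← IncSingle_mul_IncSingle hz1.le hz2.le]
    exact Submodule.mul_mem_mul (hsingle_J _ _ hz1) (hsingle_J _ _ hz2)
  -- elements of J*J vanish on pairs with nothing strictly in between
  have hJJ_zero : ∀ f ∈ J * J, ∀ a b : X, (∀ z, a < z → z < b → False) → f a b = 0 := by
    intro f hf
    refine Submodule.mul_induction_on hf ?_ ?_
    · intro g hg h hh a b hab
      rw [mul_apply]
      refine Finset.sum_eq_zero fun z hz => ?_
      obtain ⟨h1, h2⟩ := mem_Icc.1 hz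
      rcases h1.eq_or_lt with rfl | hlt
      · rw [(hJ g).1 hg, zero_mul]
      · rcases h2.eq_or_lt with rfl | hlt2
        · rw [(hJ h).1 hh, mul_zero]
        · exact (hab z hlt hlt2).elim
    · intro g h hg hh a b hab
      rw [IncidenceAlgebra.add_apply, hg a b hab, hh a b hab, add_zero]
  have hJJ_le : J * J ≤ J := fun f hf => (hJ f).2 fun a =>
    hJJ_zero f hf a a fun z h1 h2 => lt_irrefl a (h1.trans h2)
  have hJ₁_le : J₁ ≤ J := by
    intro f hf
    refine (hJ f).2 fun a => ?_
    by_contra hne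
    exact lt_irrefl a ((hJ₁ f).1 hf a a hne).1
  -- key chain lemma
  have hB : ∀ n : ℕ, ∀ x y : X, (Ioo x y).card ≤ n → x < y →
      ∃ m, 1 ≤ m ∧ IncSingle F x y ∈ J₁ ^ m := by
    intro n
    induction n with
    | zero =>
      intro x y hcard hxy
      have hcov : x ⋖ y := by
        refine ⟨hxy, fun z h1 h2 => ?_⟩
        have hz : z ∈ Ioo x y := mem_Ioo.2 ⟨h1, h2⟩
        rw [Finset.card_eq_zero.1 (Nat.le_zero.1 hcard)] at hz
        exact absurd hz (Finset.notMem_empty z)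
      exact ⟨1, le_rfl, by rw [pow_one]; exact hsingle_J₁ _ _ hcov⟩
    | succ n ih =>
      intro x y hcard hxy
      by_cases hc : x ⋖ y
      · exact ⟨1, le_rfl, by rw [pow_one]; exact hsingle_J₁ _ _ hc⟩
      · obtain ⟨z, hxz, hzy⟩ := exists_covBy_le_of_lt hxy
        have hzy' : z < y := hzy.lt_of_ne (by rintro rfl; exact hc hxz)
        have hcard' : (Ioo z y).card ≤ n := by
          have hsub : Ioo z y ⊆ Ioo x y := fun w hw =>
            mem_Ioo.2 ⟨hxz.1.trans (mem_Ioo.1 hw).1, (mem_Ioo.1 hw).2⟩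
          have hzmem : z ∈ Ioo x y := mem_Ioo.2 ⟨hxz.1, hzy'⟩
          have hlt : (Ioo z y).card < (Ioo x y).card :=
            Finset.card_lt_card ⟨hsub, fun hsup => by simpa using mem_Ioo.1 (hsup hzmem)⟩
          omega
        obtain ⟨m, hm, hmem⟩ := ih z y hcard' hzy'
        refine ⟨m + 1, by omega, ?_⟩
        rw [← IncSingle_mul_IncSingle hxz.1.le hzy, pow_succ']
        exact Submodule.mul_mem_mul (hsingle_J₁ _ _ hxz) hmem
  refine ⟨?_, ?_, ?_⟩
  · -- J₁ ⊓ (J * J) = ⊥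
    rw [eq_bot_iff]
    intro f hf
    obtain ⟨hf1, hf2⟩ := Submodule.mem_inf.1 hf
    rw [Submodule.mem_bot]
    ext a b hab
    rw [IncidenceAlgebra.zero_apply]
    by_contra hne
    have hcov := (hJ₁ f).1 hf1 a b hne
    exact hne (hJJ_zero f hf2 a b fun z h1 h2 => hcov.2 h1 h2)
  · -- J₁ ⊔ (J * J) = J
    refine le_antisymm (sup_le hJ₁_le hJJ_le) ?_
    intro f hf
    have hg1 : coverPart f ∈ J₁ := by
      refine (hJ₁ _).2 fun a b hne => ?_
      rw [coverPart_apply] at hne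
      split_ifs at hne with h
      · exact h
      · exact absurd rfl hne
    have hsub : f - coverPart f ∈ J * J := by
      rw [eq_sum_IncSingle (f - coverPart f)]
      refine Submodule.sum_mem _ fun p _ => ?_
      by_cases hp : (f - coverPart f) p.1 p.2 = 0
      · rw [hp, zero_smul]; exact Submodule.zero_mem _
      · refine Submodule.smul_mem _ _ ?_
        have hle : p.1 ≤ p.2 := le_of_ne_zero hp
        have hne' : p.1 ≠ p.2 := by
          rintro h
          apply hp
          rw [IncidenceAlgebra.sub_apply, coverPart_apply, if_neg (by rw [h]; exact fun hc => lt_irrefl _ hc.1),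
            sub_zero, h, (hJ f).1 hf]
        have hncov : ¬ p.1 ⋖ p.2 := by
          intro hc
          apply hp
          rw [IncidenceAlgebra.sub_apply, coverPart_apply, if_pos hc, sub_self]
        exact hsingle_JJ _ _ (hle.lt_of_ne hne') hncov
    rw [show f = coverPart f + (f - coverPart f) by abel]
    exact Submodule.add_mem_sup hg1 hsub
  · -- J = ⨆ m ≥ 1, J₁ ^ m
    refine le_antisymm ?_ ?_
    · intro f hf
      rw [eq_sum_IncSingle f]
      refine Submodule.sum_mem _ fun p _ => ?_
      by_cases hp : f p.1 p.2 = 0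
      · rw [hp, zero_smul]; exact Submodule.zero_mem _
      · refine Submodule.smul_mem _ _ ?_
        have hle : p.1 ≤ p.2 := le_of_ne_zero hp
        have hne' : p.1 ≠ p.2 := by
          rintro h
          exact hp (by rw [h, (hJ f).1 hf])
        obtain ⟨m, hm, hmem⟩ := hB (Ioo p.1 p.2).card p.1 p.2 le_rfl (hle.lt_of_ne hne')
        exact le_iSup₂ (f := fun (m : ℕ) (_ : 1 ≤ m) => J₁ ^ m) m hm hmem
    · refine iSup_le fun m => iSup_le fun hm => ?_
      induction m with
      | zero => exact absurd hm (by omega)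
      | succ n ih =>
        rcases Nat.eq_zero_or_pos n with rfl | hn
        · simpa [pow_one] using hJ₁_le
        · calc J₁ ^ (n + 1) = J₁ ^ n * J₁ := pow_succ _ _
            _ ≤ J * J := mul_le_mul' (ih hn) hJ₁_le
            _ ≤ J := hJJ_le
end
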